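/- arXiv:1812.04531 — 2 statements merged into one kernel-verified Lean document; each statement's English description precedes it below -/
import Mathlib

section
/- Let r, p, n be positive integers with p dividing r and let k be a nonnegative integer. Then the ℂ-linear span of {φ_{k+1}(x_d)|_W : d ∈ A_{k+1/2}(r,p,n)} in End(W) equals the centralizer algebra End_{L(r,p,n)}(W) = {F ∈ End(W) : F commutes with the diagonal action of every g ∈ L(r,p,n) on W}. Moreover, φ_{k+1}(x_d)|_W = 0 for every d ∈ A_{k+1/2}(r,p,n) having more than n blocks, and if n ≥ 2k+1 then the family (φ_{k+1}(x_d)|_W)_{d ∈ A_{k+1/2}(r,p,n)} is linearly independent. -/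
open scoped Classical
open Matrix

noncomputable section

namespace Tanabe

/-! ## Tensor space model of `V^{⊗k}` for `V = ℂ^n`.
A tensor is encoded by its coordinates, i.e. a function `(Fin k → Fin n) → ℂ`;
the basis vector `v_{i_1} ⊗ ⋯ ⊗ v_{i_k}` corresponds to the indicator function
of the tuple `(i_1, …, i_k)`. -/

abbrev TP (n k : ℕ) : Type := (Fin k → Fin n) → ℂ

/-- The linear endomorphism of `V^{⊗k}` with matrix `K` in the standard basis:
it sends the basis vector indexed by the tuple `i` to `∑ₒ K o i • (basis vector o)`. -/
def kernelMap (n k : ℕ) (K : (Fin k → Fin n) → (Fin k → Fin n) → ℂ) :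
    TP n k →ₗ[ℂ] TP n k where
  toFun f := fun o => ∑ i : Fin k → Fin n, K o i * f i
  map_add' f g := by
    funext o
    simp only [Pi.add_apply, mul_add]
    exact Finset.sum_add_distrib
  map_smul' c f := by
    funext o
    simp only [Pi.smul_apply, smul_eq_mul, RingHom.id_apply]
    rw [Finset.mul_sum]
    exact Finset.sum_congr rfl fun i _ => by ring

/-- The diagonal (tensor-power) action `g^{⊗k}` of a matrix `g` on `V^{⊗k}`. -/
def tensorPow (n k : ℕ) (g : Matrix (Fin n) (Fin n) ℂ) : TP n k →ₗ[ℂ] TP n k :=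
  kernelMap n k fun o i => ∏ t : Fin k, g (o t) (i t)

/-! ## Set partitions of `{1,…,t,1′,…,t′}`.
A set partition of `{1,…,t,1′,…,t′}` is encoded as a `Setoid` on `Fin t ⊕ Fin t`,
with `Sum.inl` the unprimed (top row) elements and `Sum.inr` the primed (bottom row)
elements; blocks are the equivalence classes. -/

abbrev SP (t : ℕ) : Type := Setoid (Fin t ⊕ Fin t)

/-- `N(B)`: number of top-row (unprimed) elements in the block `q` of `d`. -/
def topCt {t : ℕ} (d : SP t) (q : Quotient d) : ℕ :=
  Nat.card {a : Fin t // Quotient.mk d (Sum.inl a) = q}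

/-- `M(B)`: number of bottom-row (primed) elements in the block `q` of `d`. -/
def botCt {t : ℕ} (d : SP t) (q : Quotient d) : ℕ :=
  Nat.card {a : Fin t // Quotient.mk d (Sum.inr a) = q}

/-- `|d|`: the number of blocks of `d`. -/
def nBlocks {t : ℕ} (d : SP t) : ℕ := Nat.card (Quotient d)

/-- Coefficient of `φ_t(x_d)`: equals `1` if the equalities among the values of the
combined tuple `c` are *exactly* those prescribed by `d`, and `0` otherwise. -/
def coeX (n t : ℕ) (d : SP t) (c : Fin t ⊕ Fin t → Fin n) : ℂ :=
  if ∀ a b : Fin t ⊕ Fin t, d.r a b ↔ c a = c b then 1 else 0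

/-- Coefficient of `φ_t(d)` (the diagram basis): equals `1` if the values of the
combined tuple `c` agree on each block of `d`, and `0` otherwise. -/
def coeD (n t : ℕ) (d : SP t) (c : Fin t ⊕ Fin t → Fin n) : ℂ :=
  if ∀ a b : Fin t ⊕ Fin t, d.r a b → c a = c b then 1 else 0

/-- The operator `φ_t(x_d)` on `V^{⊗t}`. -/
def phiX (n t : ℕ) (d : SP t) : TP n t →ₗ[ℂ] TP n t :=
  kernelMap n t fun o i => coeX n t d (Sum.elim i o)

/-- The operator `φ_t(d)` on `V^{⊗t}` (diagram basis). -/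
def phiD (n t : ℕ) (d : SP t) : TP n t →ₗ[ℂ] TP n t :=
  kernelMap n t fun o i => coeD n t d (Sum.elim i o)

/-- `d ∈ Π_t(r)` : every block `B` satisfies `N(B) ≡ M(B) (mod r)`. -/
def inPi (r : ℕ) {t : ℕ} (d : SP t) : Prop :=
  ∀ q : Quotient d, (topCt d q : ℤ) ≡ (botCt d q : ℤ) [ZMOD (r : ℤ)]

/-- `d ∈ Λ_t(r,p,n)` (here `m = r/p`). -/
def inLambda (r p n : ℕ) {t : ℕ} (d : SP t) : Prop :=
  nBlocks d = n ∧
  (∀ q : Quotient d,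
    ((topCt d q : ℤ) ≡ (botCt d q : ℤ) [ZMOD ((r / p : ℕ) : ℤ)]) ∧
    ¬ ((topCt d q : ℤ) ≡ (botCt d q : ℤ) [ZMOD (r : ℤ)])) ∧
  (∀ q q' : Quotient d,
    (topCt d q : ℤ) - (botCt d q : ℤ) ≡ (topCt d q' : ℤ) - (botCt d q' : ℤ) [ZMOD (r : ℤ)])

/-- `d ∈ Θ_t(r,p,n)` (here `m = r/p`). -/
def inTheta (r p n : ℕ) {t : ℕ} (d : SP t) : Prop :=
  n < nBlocks d ∧
  (∀ q : Quotient d, (topCt d q : ℤ) ≡ (botCt d q : ℤ) [ZMOD ((r / p : ℕ) : ℤ)]) ∧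
  ∃ q : Quotient d, ¬ ((topCt d q : ℤ) ≡ (botCt d q : ℤ) [ZMOD (r : ℤ)])

/-- `d ∈ A_t(r,p,n) = Π_t(r) ∪ Λ_t(r,p,n) ∪ Θ_t(r,p,n)`. -/
def inA (r p n : ℕ) {t : ℕ} (d : SP t) : Prop :=
  inPi r d ∨ inLambda r p n d ∨ inTheta r p n d

/-- `d ∈ A_{k+1/2}` : `k+1` and `(k+1)′` lie in the same block. -/
def isHalf (k : ℕ) (d : SP (k + 1)) : Prop :=
  d.r (Sum.inl (Fin.last k)) (Sum.inr (Fin.last k))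

/-- `d ∈ Π_t(r,p,n)` : `d ∈ A_t(r,p,n)` with at most `n` blocks. -/
def inPiRPN (r p n : ℕ) {t : ℕ} (d : SP t) : Prop :=
  inA r p n d ∧ nBlocks d ≤ n

/-- `{φ_k(x_d) : d ∈ A_k(r,p,n)}`. -/
def TanSet (r p n k : ℕ) : Set (TP n k →ₗ[ℂ] TP n k) :=
  {T | ∃ d : SP k, inA r p n d ∧ T = phiX n k d}

/-- `{φ_{k+1}(x_d) : d ∈ A_{k+1/2}(r,p,n)}` (as endomorphisms of `V^{⊗(k+1)}`). -/
def TanSetHalf (r p n k : ℕ) : Set (TP n (k + 1) →ₗ[ℂ] TP n (k + 1)) :=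
  {T | ∃ d : SP (k + 1), (inA r p n d ∧ isHalf k d) ∧ T = phiX n (k + 1) d}

/-! ## The groups `G(r,p,n)` and `L(r,p,n)` as matrix groups. -/

/-- The monomial matrix with underlying permutation `π` and weights `a` :
its `(i,j)` entry is `a j` if `i = π j` and `0` otherwise, so that it maps
`v_j ↦ a j • v_{π j}`. -/
def monoMat (n : ℕ) (π : Equiv.Perm (Fin n)) (a : Fin n → ℂ) :
    Matrix (Fin n) (Fin n) ℂ :=
  Matrix.of fun i j => if i = π j then a j else 0

/-- `G(r,p,n)` as a set of matrices: matrices with exactly one nonzero entry in each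
row and column, whose nonzero entries are `r`-th roots of unity, and such that the
`m = r/p`-th power of the product of the nonzero entries is `1`. -/
def GSet (r p n : ℕ) : Set (Matrix (Fin n) (Fin n) ℂ) :=
  {g | ∃ (π : Equiv.Perm (Fin n)) (a : Fin n → ℂ),
    (∀ i, a i ^ r = 1) ∧ (∏ i, a i) ^ (r / p) = 1 ∧ g = monoMat n π a}

/-- The last index of `Fin n` (position `n` in 1-indexed notation). -/
def lastIdx (n : ℕ) (hn : 0 < n) : Fin n := ⟨n - 1, by omega⟩

/-- `L(r,p,n)` as a set of matrices: elements of `G(r,p,n)` whose `(n,n)` entry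
is nonzero. -/
def LSet (r p n : ℕ) (hn : 0 < n) : Set (Matrix (Fin n) (Fin n) ℂ) :=
  {g | g ∈ GSet r p n ∧ g (lastIdx n hn) (lastIdx n hn) ≠ 0}

/-- The centralizer algebra `End_{G(r,p,n)}(V^{⊗k})`. -/
def centG (r p n k : ℕ) : Set (TP n k →ₗ[ℂ] TP n k) :=
  {F | ∀ g ∈ GSet r p n, F ∘ₗ tensorPow n k g = tensorPow n k g ∘ₗ F}

/-- The subspace `W = V^{⊗k} ⊗ ℂ v_n` of `V^{⊗(k+1)}` : coordinate functions
supported on tuples whose last entry is the last index. -/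
def Wsub (n k : ℕ) (hn : 0 < n) : Submodule ℂ (TP n (k + 1)) where
  carrier := {f | ∀ j : Fin (k + 1) → Fin n, j (Fin.last k) ≠ lastIdx n hn → f j = 0}
  add_mem' := by
    intro a b ha hb j hj
    simp [Pi.add_apply, ha j hj, hb j hj]
  zero_mem' := by intro j hj; rfl
  smul_mem' := by
    intro c a ha j hj
    simp [Pi.smul_apply, ha j hj]


/-! ## Group structure -/

abbrev GLn (n : ℕ) := Matrix.GeneralLinearGroup (Fin n) ℂ

lemma monoMat_mul (n : ℕ) (π σ : Equiv.Perm (Fin n)) (a b : Fin n → ℂ) :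
    monoMat n π a * monoMat n σ b = monoMat n (π * σ) (fun j => a (σ j) * b j) := by
  ext i j
  simp only [monoMat, Matrix.mul_apply, Matrix.of_apply, mul_ite, mul_zero, ite_mul, zero_mul]
  rw [Finset.sum_ite_eq' Finset.univ (σ j)]
  simp [Equiv.Perm.mul_apply]
  congr

lemma monoMat_one (n : ℕ) : monoMat n 1 (fun _ => (1 : ℂ)) = 1 := by
  ext i j
  simp [monoMat, Matrix.one_apply]
  congr

lemma one_mem_GSet (r p n : ℕ) : (1 : Matrix (Fin n) (Fin n) ℂ) ∈ GSet r p n :=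
  ⟨1, fun _ => 1, fun _ => one_pow r, by simp, (monoMat_one n).symm⟩

lemma mul_mem_GSet {r p n : ℕ} {g h : Matrix (Fin n) (Fin n) ℂ}
    (hg : g ∈ GSet r p n) (hh : h ∈ GSet r p n) : g * h ∈ GSet r p n := by
  obtain ⟨π, a, ha, hpa, rfl⟩ := hg
  obtain ⟨σ, b, hb, hpb, rfl⟩ := hh
  refine ⟨π * σ, fun j => a (σ j) * b j, fun i => by rw [mul_pow, ha, hb, one_mul], ?_,
    monoMat_mul n π σ a b⟩
  have h1 : (∏ i, (a (σ i) * b i)) = (∏ i, a i) * ∏ i, b i := by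
    rw [Finset.prod_mul_distrib, Equiv.prod_comp σ a]
  rw [h1, mul_pow, hpa, hpb, one_mul]

lemma a_ne_zero {r : ℕ} (hr : 0 < r) {a : ℂ} (ha : a ^ r = 1) : a ≠ 0 := by
  intro h0
  rw [h0, zero_pow hr.ne'] at ha
  exact zero_ne_one ha

lemma monoMat_mul_inv (n : ℕ) (π : Equiv.Perm (Fin n)) (a : Fin n → ℂ)
    (ha : ∀ i, a i ≠ 0) :
    monoMat n π a * monoMat n π⁻¹ (fun j => (a (π⁻¹ j))⁻¹) = 1 := by
  simp only [monoMat_mul]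
  rw [mul_inv_cancel,
    show (fun j => a (π⁻¹ j) * (a (π⁻¹ j))⁻¹) = fun _ : Fin n => (1 : ℂ) from
      funext fun j => mul_inv_cancel₀ (ha _),
    monoMat_one]

/-- The value of the inverse of a unit whose underlying matrix is a monomial matrix. -/
lemma gl_inv_val {n : ℕ} (g : GLn n) (π : Equiv.Perm (Fin n)) (a : Fin n → ℂ)
    (ha : ∀ i, a i ≠ 0) (hg : (↑g : Matrix (Fin n) (Fin n) ℂ) = monoMat n π a) :
    (↑g⁻¹ : Matrix (Fin n) (Fin n) ℂ) = monoMat n π⁻¹ (fun j => (a (π⁻¹ j))⁻¹) := by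
  have hmul : (↑g : Matrix (Fin n) (Fin n) ℂ) *
      monoMat n π⁻¹ (fun j => (a (π⁻¹ j))⁻¹) = 1 := by
    rw [hg]; exact monoMat_mul_inv n π a ha
  calc (↑g⁻¹ : Matrix (Fin n) (Fin n) ℂ)
      = ↑g⁻¹ * ((↑g : Matrix (Fin n) (Fin n) ℂ) *
          monoMat n π⁻¹ (fun j => (a (π⁻¹ j))⁻¹)) := by rw [hmul, mul_one]
    _ = ((↑g⁻¹ : Matrix (Fin n) (Fin n) ℂ) * ↑g) *
          monoMat n π⁻¹ (fun j => (a (π⁻¹ j))⁻¹) := by rw [mul_assoc]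
    _ = monoMat n π⁻¹ (fun j => (a (π⁻¹ j))⁻¹) := by
          rw [← Units.val_mul, inv_mul_cancel, Units.val_one, one_mul]

lemma inv_mem_GSet {r p n : ℕ} (hr : 0 < r) {g : GLn n}
    (hg : (↑g : Matrix (Fin n) (Fin n) ℂ) ∈ GSet r p n) :
    (↑g⁻¹ : Matrix (Fin n) (Fin n) ℂ) ∈ GSet r p n := by
  obtain ⟨π, a, ha, hpa, hgm⟩ := hg
  have hane : ∀ i, a i ≠ 0 := fun i => a_ne_zero hr (ha i)
  refine ⟨π⁻¹, fun j => (a (π⁻¹ j))⁻¹, fun i => by rw [inv_pow, ha, inv_one], ?_,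
    gl_inv_val g π a hane hgm⟩
  rw [Finset.prod_inv_distrib, Equiv.prod_comp π⁻¹ a, inv_pow, hpa, inv_one]

/-- The complex reflection group `G(r,p,n)` as a subgroup of `GL_n(ℂ)`. -/
def GGroup (r p n : ℕ) (hr : 0 < r) : Subgroup (GLn n) where
  carrier := {g | (↑g : Matrix (Fin n) (Fin n) ℂ) ∈ GSet r p n}
  one_mem' := by
    show (↑(1 : GLn n) : Matrix (Fin n) (Fin n) ℂ) ∈ GSet r p n
    rw [Units.val_one]; exact one_mem_GSet r p n
  mul_mem' := by
    intro g h hg hh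
    show (↑(g * h) : Matrix (Fin n) (Fin n) ℂ) ∈ GSet r p n
    rw [Units.val_mul]; exact mul_mem_GSet hg hh
  inv_mem' := by
    intro g hg
    exact inv_mem_GSet hr hg

lemma monoMat_last {n : ℕ} (hn : 0 < n) (π : Equiv.Perm (Fin n)) (a : Fin n → ℂ)
    (h : monoMat n π a (lastIdx n hn) (lastIdx n hn) ≠ 0) :
    π (lastIdx n hn) = lastIdx n hn ∧ a (lastIdx n hn) ≠ 0 := by
  by_cases hp : lastIdx n hn = π (lastIdx n hn)
  · refine ⟨hp.symm, ?_⟩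
    intro h0
    apply h
    simp [monoMat, ← hp, h0]
  · exfalso; apply h; simp [monoMat, hp]

lemma monoMat_last_entry {n : ℕ} (hn : 0 < n) (π : Equiv.Perm (Fin n)) (a : Fin n → ℂ)
    (hp : π (lastIdx n hn) = lastIdx n hn) :
    monoMat n π a (lastIdx n hn) (lastIdx n hn) = a (lastIdx n hn) := by
  simp [monoMat, hp]

/-- The subgroup `L(r,p,n)` of `G(r,p,n)` (matrices with nonzero `(n,n)` entry). -/
def LGroup (r p n : ℕ) (hr : 0 < r) (hn : 0 < n) : Subgroup (GLn n) where
  carrier := {g | (↑g : Matrix (Fin n) (Fin n) ℂ) ∈ LSet r p n hn}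
  one_mem' := by
    refine ⟨?_, ?_⟩
    · show (↑(1 : GLn n) : Matrix (Fin n) (Fin n) ℂ) ∈ GSet r p n
      rw [Units.val_one]; exact one_mem_GSet r p n
    · rw [Units.val_one]
      simp [Matrix.one_apply]
  mul_mem' := by
    rintro g h ⟨hg, hge⟩ ⟨hh, hhe⟩
    refine ⟨?_, ?_⟩
    · show (↑(g * h) : Matrix (Fin n) (Fin n) ℂ) ∈ GSet r p n
      rw [Units.val_mul]; exact mul_mem_GSet hg hh
    · obtain ⟨π, a, ha, hpa, hgm⟩ := hg
      obtain ⟨σ, b, hb, hpb, hhm⟩ := hh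
      rw [hgm] at hge
      rw [hhm] at hhe
      obtain ⟨hπ, ha0⟩ := monoMat_last hn π a hge
      obtain ⟨hσ, hb0⟩ := monoMat_last hn σ b hhe
      rw [Units.val_mul, hgm, hhm, monoMat_mul]
      rw [monoMat_last_entry hn _ _ (by simp [Equiv.Perm.mul_apply, hσ, hπ])]
      simp only [hσ]
      exact mul_ne_zero ha0 hb0
  inv_mem' := by
    rintro g ⟨hg, hge⟩
    obtain ⟨π, a, ha, hpa, hgm⟩ := hg
    have hane : ∀ i, a i ≠ 0 := fun i => a_ne_zero hr (ha i)
    rw [hgm] at hge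
    obtain ⟨hπ, ha0⟩ := monoMat_last hn π a hge
    refine ⟨inv_mem_GSet hr ⟨π, a, ha, hpa, hgm⟩, ?_⟩
    rw [gl_inv_val g π a hane hgm]
    have hπi : π⁻¹ (lastIdx n hn) = lastIdx n hn := by
      conv_lhs => rw [← hπ]
      simp
    rw [monoMat_last_entry hn _ _ hπi]
    simp only [hπi]
    exact inv_ne_zero ha0

lemma GGroup_le (r p n : ℕ) (hr : 0 < r) : GGroup r p n hr ≤ GGroup r 1 n hr := by
  rintro g ⟨π, a, ha, hpa, hgm⟩
  refine ⟨π, a, ha, ?_, hgm⟩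
  rw [Nat.div_one, ← Finset.prod_pow]
  simp [ha]

lemma LGroup_le (r p n : ℕ) (hr : 0 < r) (hn : 0 < n) :
    LGroup r p n hr hn ≤ LGroup r 1 n hr hn := by
  rintro g ⟨hg, hge⟩
  exact ⟨GGroup_le r p n hr hg, hge⟩

lemma LGroup_le_GGroup (r p n : ℕ) (hr : 0 < r) (hn : 0 < n) :
    LGroup r p n hr hn ≤ GGroup r p n hr := fun _ hg => hg.1

lemma LGroup_le_G1 (r p n : ℕ) (hr : 0 < r) (hn : 0 < n) :
    LGroup r p n hr hn ≤ GGroup r 1 n hr :=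
  le_trans (LGroup_le_GGroup r p n hr hn) (GGroup_le r p n hr)

/-! ## Representation-theoretic notions -/

section Reps

variable {G : Type*} [Monoid G] {V : Type*} [AddCommGroup V] [Module ℂ V]

/-- A submodule invariant under a representation. -/
def RepInvariant (ρ : Representation ℂ G V) (q : Submodule ℂ V) : Prop :=
  ∀ (g : G), ∀ v ∈ q, ρ g v ∈ q

/-- Irreducibility of a representation. -/
def RepIrreducible (ρ : Representation ℂ G V) : Prop :=
  Nontrivial V ∧ ∀ q : Submodule ℂ V, RepInvariant ρ q → q = ⊥ ∨ q = ⊤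

/-- Irreducibility of an invariant subspace, as a subrepresentation. -/
def SubIrreducible (ρ : Representation ℂ G V) (q : Submodule ℂ V) : Prop :=
  q ≠ ⊥ ∧ ∀ q' : Submodule ℂ V, q' ≤ q → RepInvariant ρ q' → q' = ⊥ ∨ q' = q

/-- Two (invariant) subspaces are isomorphic as subrepresentations: there is a
`ℂ`-linear equivalence between them intertwining the action. -/
def IsSubrepIso (ρ : Representation ℂ G V) (q q' : Submodule ℂ V) : Prop :=
  ∃ e : q ≃ₗ[ℂ] q', ∀ (g : G) (x : V) (hx : x ∈ q) (hgx : ρ g x ∈ q),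
    ((e ⟨ρ g x, hgx⟩ : q') : V) = ρ g ((e ⟨x, hx⟩ : q') : V)

/-- A representation is multiplicity free: it is an (internal) direct sum of
pairwise non-isomorphic irreducible subrepresentations. -/
def RepMultFree (ρ : Representation ℂ G V) : Prop :=
  ∃ (ι : Type) (_ : Fintype ι) (W : ι → Submodule ℂ V),
    (∀ i, RepInvariant ρ (W i)) ∧
    (∀ i, SubIrreducible ρ (W i)) ∧
    iSupIndep W ∧ (⨆ i, W i) = ⊤ ∧
    (∀ i j, i ≠ j → ¬ IsSubrepIso ρ (W i) (W j))

/-- Restriction of a representation of `K` to a subgroup `H ≤ K`. -/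
def restrictRep {G : Type*} [Group G] {H K : Subgroup G} (h : H ≤ K)
    (ρ : Representation ℂ ↥K V) : Representation ℂ ↥H V :=
  MonoidHom.comp ρ (Subgroup.inclusion h)

end Reps

/-! ## The elements `ζ_i^l ζ_j^{-l} s_{ij}` and the central elements `κ` -/

/-- `ζ = exp(2πi/r)`, a primitive `r`-th root of unity. -/
def zeta (r : ℕ) : ℂ := Complex.exp (2 * Real.pi * Complex.I / r)

lemma zeta_pow_self {r : ℕ} (hr : 0 < r) : zeta r ^ r = 1 := by
  rw [zeta, ← Complex.exp_nat_mul]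
  rw [show (r : ℂ) * (2 * Real.pi * Complex.I / r) = 2 * Real.pi * Complex.I by
    rw [mul_div_assoc']
    exact mul_div_cancel_left₀ _ (Nat.cast_ne_zero.mpr hr.ne')]
  exact Complex.exp_two_pi_mul_I

lemma zeta_ne_zero (r : ℕ) : zeta r ≠ 0 := Complex.exp_ne_zero _

/-- Weights of the monomial matrix `ζ_i^l ζ_j^{-l} s_{ij}` : `ζ^l` in position `i`,
`ζ^{-l}` in position `j`, `1` elsewhere. -/
def zijWt (r l : ℕ) {n : ℕ} (i j : Fin n) : Fin n → ℂ :=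
  fun t => if t = i then zeta r ^ l else if t = j then (zeta r ^ l)⁻¹ else 1

/-- The matrix `ζ_i^l ζ_j^{-l} s_{ij}`. -/
def zijMat (n r l : ℕ) (i j : Fin n) : Matrix (Fin n) (Fin n) ℂ :=
  monoMat n (Equiv.swap i j) (zijWt r l i j)

lemma zijWt_ne_zero (r l : ℕ) {n : ℕ} (i j : Fin n) (t : Fin n) :
    zijWt r l i j t ≠ 0 := by
  unfold zijWt
  split_ifs
  · exact pow_ne_zero _ (zeta_ne_zero r)
  · exact inv_ne_zero (pow_ne_zero _ (zeta_ne_zero r))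
  · exact one_ne_zero

lemma zijWt_pow {r l : ℕ} (hr : 0 < r) {n : ℕ} (i j : Fin n) (t : Fin n) :
    zijWt r l i j t ^ r = 1 := by
  unfold zijWt
  split_ifs
  · rw [← pow_mul, mul_comm, pow_mul, zeta_pow_self hr, one_pow]
  · rw [inv_pow, ← pow_mul, mul_comm, pow_mul, zeta_pow_self hr, one_pow, inv_one]
  · exact one_pow r

lemma zijWt_prod {r l : ℕ} {n : ℕ} {i j : Fin n} (hij : i ≠ j) :
    (∏ t, zijWt r l i j t) = 1 := by
  have hfun : (fun t => zijWt r l i j t) =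
      fun t => (if t = i then zeta r ^ l else 1) * (if t = j then (zeta r ^ l)⁻¹ else 1) := by
    funext t
    by_cases h1 : t = i <;> by_cases h2 : t = j
    · exact absurd (h1.symm.trans h2) hij
    · simp [zijWt, h1, h2, hij]
    · simp [zijWt, h1, h2, hij, Ne.symm hij]
    · simp [zijWt, h1, h2]
  rw [hfun, Finset.prod_mul_distrib, Finset.prod_ite_eq' Finset.univ i,
    Finset.prod_ite_eq' Finset.univ j]
  simp [mul_inv_cancel₀ (pow_ne_zero l (zeta_ne_zero r))]

lemma zij_mem_GSet (r p n l : ℕ) (hr : 0 < r) (i j : Fin n) (hij : i ≠ j) :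
    zijMat n r l i j ∈ GSet r p n := by
  refine ⟨Equiv.swap i j, zijWt r l i j, zijWt_pow hr i j, ?_, rfl⟩
  rw [zijWt_prod hij, one_pow]

/-- A monomial matrix with nonzero weights, as an element of `GL_n(ℂ)`. -/
def monoUnit (n : ℕ) (π : Equiv.Perm (Fin n)) (a : Fin n → ℂ) (ha : ∀ i, a i ≠ 0) :
    GLn n where
  val := monoMat n π a
  inv := monoMat n π⁻¹ (fun j => (a (π⁻¹ j))⁻¹)
  val_inv := monoMat_mul_inv n π a ha
  inv_val := by
    simp only [monoMat_mul]
    rw [inv_mul_cancel,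
      show (fun j => (a (π⁻¹ (π j)))⁻¹ * a j) = fun _ : Fin n => (1 : ℂ) from
        funext fun j => by rw [show π⁻¹ (π j) = j from π.symm_apply_apply j, inv_mul_cancel₀ (ha _)],
      monoMat_one]

/-- The element `ζ_i^l ζ_j^{-l} s_{ij}` of `G(r,p,n)`. -/
def zijG (r p n l : ℕ) (hr : 0 < r) (i j : Fin n) (hij : i ≠ j) : ↥(GGroup r p n hr) :=
  ⟨monoUnit n (Equiv.swap i j) (zijWt r l i j) (zijWt_ne_zero r l i j),
   zij_mem_GSet r p n l hr i j hij⟩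

/-- The element `κ_{r,n} = (1/r)·Σ_{l<r} Σ_{i<j} ζ_i^l ζ_j^{-l} s_{ij}` of the group
algebra `ℂ[G(r,p,n)]`. -/
def kappaGA (r p n : ℕ) (hr : 0 < r) : MonoidAlgebra ℂ ↥(GGroup r p n hr) :=
  (1 / (r : ℂ)) • ∑ l ∈ Finset.range r, ∑ i : Fin n, ∑ j : Fin n,
    if h : i < j then MonoidAlgebra.single (zijG r p n l hr i j h.ne) 1 else 0

lemma zijL_last (r l : ℕ) {n : ℕ} (hn : 0 < n) (i j : Fin n)
    (hi : i ≠ lastIdx n hn) (hj : j ≠ lastIdx n hn) :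
    zijMat n r l i j (lastIdx n hn) (lastIdx n hn) ≠ 0 := by
  have hswap : Equiv.swap i j (lastIdx n hn) = lastIdx n hn :=
    Equiv.swap_apply_of_ne_of_ne (Ne.symm hi) (Ne.symm hj)
  rw [zijMat, monoMat_last_entry hn _ _ hswap]
  exact zijWt_ne_zero r l i j _

/-- The element `ζ_i^l ζ_j^{-l} s_{ij}` of `L(r,p,n)`, for `i, j ≤ n-1`. -/
def zijL (r p n l : ℕ) (hr : 0 < r) (hn : 0 < n) (i j : Fin n) (hij : i ≠ j)
    (hi : i ≠ lastIdx n hn) (hj : j ≠ lastIdx n hn) : ↥(LGroup r p n hr hn) :=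
  ⟨monoUnit n (Equiv.swap i j) (zijWt r l i j) (zijWt_ne_zero r l i j),
   ⟨zij_mem_GSet r p n l hr i j hij, zijL_last r l hn i j hi hj⟩⟩

/-- The element `κ_{r,n-1} = (1/r)·Σ_{l<r} Σ_{1≤i<j≤n-1} ζ_i^l ζ_j^{-l} s_{ij}` of the
group algebra `ℂ[L(r,p,n)]`. -/
def kappaLA (r p n : ℕ) (hr : 0 < r) (hn : 0 < n) :
    MonoidAlgebra ℂ ↥(LGroup r p n hr hn) :=
  (1 / (r : ℂ)) • ∑ l ∈ Finset.range r, ∑ i : Fin n, ∑ j : Fin n,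
    if h : i < j ∧ (j : ℕ) < n - 1 then
      MonoidAlgebra.single
        (zijL r p n l hr hn i j h.1.ne
          (by
            refine Fin.ne_of_val_ne ?_
            have h1 : (i : ℕ) < (j : ℕ) := h.1
            have h2 : (j : ℕ) < n - 1 := h.2
            show (i : ℕ) ≠ n - 1
            omega)
          (by
            refine Fin.ne_of_val_ne ?_
            have h2 : (j : ℕ) < n - 1 := h.2
            show (j : ℕ) ≠ n - 1
            omega)) 1
    else 0

/-! ## The induced representation of statement on `Ind_L^G σ` -/

/-- The right regular representation of a group `G` on the space of functions
`G → ℂ`, given by `(x · f)(g) = f(g x)`. -/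
def regRep (G : Type*) [Group G] : Representation ℂ G (G → ℂ) where
  toFun x :=
    { toFun := fun f => fun g => f (g * x)
      map_add' := fun f g => rfl
      map_smul' := fun c f => rfl }
  map_one' := by
    refine LinearMap.ext fun f => ?_
    funext g
    simp
  map_mul' x y := by
    refine LinearMap.ext fun f => ?_
    funext g
    simp [Module.End.mul_apply, mul_assoc]

/-- The space of functions `f : G(r,p,n) → ℂ` with `f(hg) = σ(h)·f(g)` for all
`h ∈ L(r,p,n)`, where `σ(h)` is the `(n,n)` entry of `h`. -/
def IndSig (r p n : ℕ) (hr : 0 < r) (hn : 0 < n) :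
    Submodule ℂ (↥(GGroup r p n hr) → ℂ) where
  carrier := {f | ∀ h g : ↥(GGroup r p n hr),
    ((h : GLn n) : Matrix (Fin n) (Fin n) ℂ) ∈ LSet r p n hn →
    f (h * g) = ((h : GLn n) : Matrix (Fin n) (Fin n) ℂ) (lastIdx n hn) (lastIdx n hn) * f g}
  add_mem' := by
    intro a b ha hb h g hh
    simp [ha h g hh, hb h g hh, mul_add]
  zero_mem' := by intro h g hh; simp
  smul_mem' := by
    intro c a ha h g hh
    simp [ha h g hh]
    ring

lemma IndSig_invariant (r p n : ℕ) (hr : 0 < r) (hn : 0 < n) :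
    RepInvariant (regRep ↥(GGroup r p n hr)) (IndSig r p n hr hn) := by
  intro x f hf h g hh
  show f ((h * g) * x) = _ * f (g * x)
  rw [mul_assoc]
  exact hf h (g * x) hh

/-- The natural representation of `G(r,p,n)` on `ℂ^n` by matrix-vector
multiplication. -/
def natRep (r p n : ℕ) (hr : 0 < r) : Representation ℂ ↥(GGroup r p n hr) (Fin n → ℂ) where
  toFun g := Matrix.mulVecLin ((g : GLn n) : Matrix (Fin n) (Fin n) ℂ)
  map_one' := by
    simp only [OneMemClass.coe_one, Units.val_one, Matrix.mulVecLin_one]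
    rfl
  map_mul' g h := by
    simp only [Subgroup.coe_mul, Units.val_mul, Matrix.mulVecLin_mul]
    rw [Module.End.mul_eq_comp]

/-! ## The operators `Z_{t,r}` and `Z_{t+1/2,r}` -/

/-- `S ∪ S′` as a finite subset of `Fin t ⊕ Fin t`. -/
def SSfin {t : ℕ} (S : Finset (Fin t)) : Finset (Fin t ⊕ Fin t) :=
  Finset.univ.filter fun x => Sum.elim (· ∈ S) (· ∈ S) x

/-- The set partition `b_S` with blocks `S ∪ S′` and `{l,l′}` for `l ∉ S`. -/
def bS {t : ℕ} (S : Finset (Fin t)) : SP t :=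
  Setoid.ker fun x : Fin t ⊕ Fin t =>
    if x ∈ SSfin S then (none : Option (Fin t ⊕ Fin t)) else some x

/-- The set partition `d_I` with blocks `I`, `(S ∪ S′) \ I` and `{l,l′}` for `l ∉ S`. -/
def dI {t : ℕ} (S : Finset (Fin t)) (I : Finset (Fin t ⊕ Fin t)) : SP t :=
  Setoid.ker fun x : Fin t ⊕ Fin t =>
    if x ∈ I then (Sum.inl true : Bool ⊕ (Fin t ⊕ Fin t))
    else if x ∈ SSfin S then Sum.inl false else Sum.inr x

/-- `N(I)` : the number of top-row (unprimed) elements of `I`. -/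
def NIc {t : ℕ} (I : Finset (Fin t ⊕ Fin t)) : ℕ :=
  (I.filter fun x => x.isLeft = true).card

/-- `M(I)` : the number of bottom-row (primed) elements of `I`. -/
def MIc {t : ℕ} (I : Finset (Fin t ⊕ Fin t)) : ℕ :=
  (I.filter fun x => x.isRight = true).card

/-- The operator `Z_{t,r}` on `V^{⊗t}`.  The inner sum over unordered partitions
`{I, (S∪S′)∖I}` (each counted once) is written as `1/2` times the sum over ordered
proper nonempty subsets `I` of `S ∪ S′`; these agree since `d_I = d_{(S∪S′)∖I}` and
the signs coincide. -/
def Zop (r n t : ℕ) : TP n t →ₗ[ℂ] TP n t :=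
  (n.choose 2 : ℂ) • LinearMap.id +
  ∑ S ∈ (Finset.univ : Finset (Fin t)).powerset.filter (fun S => S ≠ ∅),
    ((-1 : ℂ) ^ S.card) •
      (((n : ℂ) - 1) • phiD n t (bS S) +
        (1 / 2 : ℂ) •
          ∑ I ∈ (SSfin S).powerset.filter (fun I =>
              I ≠ ∅ ∧ I ≠ SSfin S ∧ ((NIc I : ℤ) ≡ (MIc I : ℤ) [ZMOD (r : ℤ)])),
            ((-1 : ℂ) ^ ((NIc I : ℤ) - (MIc I : ℤ))) • (phiD n t (dI S I) - phiD n t (bS S)))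

/-- The operator `Z_{k+1/2,r}` on `V^{⊗(k+1)}`; as in `Zop`, but for `S` containing
`k+1` the inner sum is restricted to partitions in which `k+1` and `(k+1)′` lie in the
same part. -/
def ZopHalf (r n k : ℕ) : TP n (k + 1) →ₗ[ℂ] TP n (k + 1) :=
  (n.choose 2 : ℂ) • LinearMap.id +
  ∑ S ∈ (Finset.univ : Finset (Fin (k + 1))).powerset.filter (fun S => S ≠ ∅),
    ((-1 : ℂ) ^ S.card) •
      (((n : ℂ) - 1) • phiD n (k + 1) (bS S) +
        (1 / 2 : ℂ) •
          ∑ I ∈ (SSfin S).powerset.filter (fun I =>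
              I ≠ ∅ ∧ I ≠ SSfin S ∧ ((NIc I : ℤ) ≡ (MIc I : ℤ) [ZMOD (r : ℤ)]) ∧
              (Fin.last k ∈ S →
                ((Sum.inl (Fin.last k) : Fin (k+1) ⊕ Fin (k+1)) ∈ I ↔
                  (Sum.inr (Fin.last k) : Fin (k+1) ⊕ Fin (k+1)) ∈ I))),
            ((-1 : ℂ) ^ ((NIc I : ℤ) - (MIc I : ℤ))) •
              (phiD n (k + 1) (dI S I) - phiD n (k + 1) (bS S)))

/-- The diagonal action of `κ_{r,n}` on `V^{⊗k}`. -/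
def kappaOpFull (r n k : ℕ) : TP n k →ₗ[ℂ] TP n k :=
  (1 / (r : ℂ)) • ∑ l ∈ Finset.range r, ∑ i : Fin n, ∑ j : Fin n,
    if i < j then tensorPow n k (zijMat n r l i j) else 0

/-- The diagonal action of `κ_{r,n-1}` on `V^{⊗(k+1)}`. -/
def kappaOpL (r n k : ℕ) : TP n (k + 1) →ₗ[ℂ] TP n (k + 1) :=
  (1 / (r : ℂ)) • ∑ l ∈ Finset.range r, ∑ i : Fin n, ∑ j : Fin n,
    if i < j ∧ (j : ℕ) < n - 1 then tensorPow n (k + 1) (zijMat n r l i j) else 0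

/-- `w ⊗ v_n ∈ V^{⊗(k+1)}` for `w ∈ V^{⊗k}`. -/
def extendLast (n k : ℕ) (hn : 0 < n) (w : TP n k) : TP n (k + 1) :=
  fun j => if j (Fin.last k) = lastIdx n hn then w (fun t => j t.castSucc) else 0

/-- `A ⊗ Id_{V^{⊗(l-j)}}` : the extension of an operator on `V^{⊗j}` to `V^{⊗l}`,
acting on the first `j` tensor factors. -/
def extendOp (n j l : ℕ) (hjl : j ≤ l) (A : TP n j →ₗ[ℂ] TP n j) :
    TP n l →ₗ[ℂ] TP n l where
  toFun f := fun u =>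
    A (fun x : Fin j → Fin n =>
        f (fun t : Fin l => if h : (t : ℕ) < j then x ⟨t, h⟩ else u t))
      (fun s : Fin j => u (Fin.castLE hjl s))
  map_add' f g := by
    funext u
    show A (fun x : Fin j → Fin n =>
        (f + g) (fun t : Fin l => if h : (t : ℕ) < j then x ⟨t, h⟩ else u t))
      (fun s : Fin j => u (Fin.castLE hjl s)) =
      A (fun x : Fin j → Fin n =>
        f (fun t : Fin l => if h : (t : ℕ) < j then x ⟨t, h⟩ else u t))
      (fun s : Fin j => u (Fin.castLE hjl s)) +
      A (fun x : Fin j → Fin n =>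
        g (fun t : Fin l => if h : (t : ℕ) < j then x ⟨t, h⟩ else u t))
      (fun s : Fin j => u (Fin.castLE hjl s))
    have h : (fun x : Fin j → Fin n =>
        (f + g) (fun t : Fin l => if h : (t : ℕ) < j then x ⟨t, h⟩ else u t)) =
      (fun x : Fin j → Fin n =>
        f (fun t : Fin l => if h : (t : ℕ) < j then x ⟨t, h⟩ else u t)) +
      (fun x : Fin j → Fin n =>
        g (fun t : Fin l => if h : (t : ℕ) < j then x ⟨t, h⟩ else u t)) := rfl
    rw [h, map_add]
    rfl
  map_smul' c f := by
    funext u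
    show A (fun x : Fin j → Fin n =>
        (c • f) (fun t : Fin l => if h : (t : ℕ) < j then x ⟨t, h⟩ else u t))
      (fun s : Fin j => u (Fin.castLE hjl s)) =
      c • (A (fun x : Fin j → Fin n =>
        f (fun t : Fin l => if h : (t : ℕ) < j then x ⟨t, h⟩ else u t))
      (fun s : Fin j => u (Fin.castLE hjl s)))
    have h : (fun x : Fin j → Fin n =>
        (c • f) (fun t : Fin l => if h : (t : ℕ) < j then x ⟨t, h⟩ else u t)) =
      c • (fun x : Fin j → Fin n =>
        f (fun t : Fin l => if h : (t : ℕ) < j then x ⟨t, h⟩ else u t)) := rfl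
    rw [h, _root_.map_smul]
    rfl

/-! ## Diagram multiplication (statement of the structure constants) -/

/-- The bottom row of `d₁` matches the top row of `d₂`. -/
def rowMatch (k : ℕ) (d1 d2 : SP k) : Prop :=
  ∀ i j : Fin k, d1.r (Sum.inr i) (Sum.inr j) ↔ d2.r (Sum.inl i) (Sum.inl j)

/-- Extend a setoid on `α` along an injection `e : α → β` by singleton classes on
the complement of the range. -/
def extendSetoid {α β : Type*} (e : α → β) (he : Function.Injective e)
    (d : Setoid α) : Setoid β where
  r x y := x = y ∨ ∃ a b, d.r a b ∧ x = e a ∧ y = e b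
  iseqv := by
    constructor
    · intro x; exact Or.inl rfl
    · rintro x y (rfl | ⟨a, b, hab, rfl, rfl⟩)
      · exact Or.inl rfl
      · exact Or.inr ⟨b, a, d.iseqv.symm hab, rfl, rfl⟩
    · rintro x y z (rfl | ⟨a, b, hab, rfl, rfl⟩) h2
      · exact h2
      · rcases h2 with rfl | ⟨a', b', hab', hy, rfl⟩
        · exact Or.inr ⟨a, b, hab, rfl, rfl⟩
        · have hba : b = a' := he hy
          exact Or.inr ⟨a, b', d.iseqv.trans hab (hba ▸ hab'), rfl, rfl⟩

/-- The three-row vertex set: top row, middle row, bottom row. -/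
abbrev T3 (k : ℕ) : Type := Fin k ⊕ (Fin k ⊕ Fin k)

/-- `d₁` placed on the top and middle rows. -/
def embT (k : ℕ) : Fin k ⊕ Fin k → T3 k := Sum.map id Sum.inl

/-- `d₂` placed on the middle and bottom rows. -/
def embB (k : ℕ) : Fin k ⊕ Fin k → T3 k := Sum.inr

/-- The outer (top and bottom) rows. -/
def embO (k : ℕ) : Fin k ⊕ Fin k → T3 k := Sum.map id Sum.inr

lemma embT_inj (k : ℕ) : Function.Injective (embT k) :=
  Function.Injective.sumMap Function.injective_id Sum.inl_injective

/-- The stacked three-row diagram : the join of `d₁` (on top∪middle) and `d₂`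
(on middle∪bottom); its classes are the connected components. -/
def stacked (k : ℕ) (d1 d2 : SP k) : Setoid (T3 k) :=
  extendSetoid (embT k) (embT_inj k) d1 ⊔ extendSetoid (embB k) Sum.inr_injective d2

/-- The concatenation `d₁ ∘ d₂`, i.e. the restriction of the stacked diagram to the
outer rows. -/
def compSetoid (k : ℕ) (d1 d2 : SP k) : SP k :=
  Setoid.comap (embO k) (stacked k d1 d2)

/-- `[d₁ ∘ d₂]` : the number of connected components of the stacked diagram contained
entirely in the middle row. -/
def midCount (k : ℕ) (d1 d2 : SP k) : ℕ :=
  Nat.card {q : Quotient (stacked k d1 d2) //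
    ∀ x : T3 k, Quotient.mk (stacked k d1 d2) x = q → ∃ i : Fin k, x = Sum.inr (Sum.inl i)}

/-- A block entirely contained in the top row. -/
def topOnly {k : ℕ} (d : SP k) (q : Quotient d) : Prop :=
  ∀ x, Quotient.mk d x = q → ∃ i : Fin k, x = Sum.inl i

/-- A block entirely contained in the bottom row. -/
def botOnly {k : ℕ} (d : SP k) (q : Quotient d) : Prop :=
  ∀ x, Quotient.mk d x = q → ∃ i : Fin k, x = Sum.inr i

/-- `x` lies in the block merged from the pair `pr = (q₁, q₂)`. -/
def memPair {k : ℕ} (d1 d2 : SP k) : Fin k ⊕ Fin k → Quotient d1 × Quotient d2 → Prop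
  | Sum.inl i, pr => Quotient.mk d1 (Sum.inl i) = pr.1
  | Sum.inr i, pr => Quotient.mk d2 (Sum.inr i) = pr.2

/-- `d` is obtained from `d₁ ∘ d₂` by choosing an injective partial matching between
the top-only blocks of `d₁` and the bottom-only blocks of `d₂` and merging each
matched pair into a single block. -/
def IsCoarsening (k : ℕ) (d1 d2 d : SP k) : Prop :=
  ∃ P : Finset (Quotient d1 × Quotient d2),
    (∀ pr ∈ P, topOnly d1 pr.1 ∧ botOnly d2 pr.2) ∧
    (∀ pr ∈ P, ∀ pr' ∈ P, pr.1 = pr'.1 → pr = pr') ∧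
    (∀ pr ∈ P, ∀ pr' ∈ P, pr.2 = pr'.2 → pr = pr') ∧
    (∀ x y : Fin k ⊕ Fin k, d.r x y ↔
      ((compSetoid k d1 d2).r x y ∨ ∃ pr ∈ P, memPair d1 d2 x pr ∧ memPair d1 d2 y pr))

/-- The (integer) falling factorial `(a)_b = a(a-1)⋯(a-b+1)`. -/
def fallingC (a : ℤ) (b : ℕ) : ℤ := ∏ i ∈ Finset.range b, (a - i)

/-! ## The elements `c₁, c₂` of `G(2,2,2k)` and the operator `M_{k,2,2}` -/

/-- The underlying function of the permutation `(1 2)(3 4)⋯(2k-1 2k)` of `Fin (2k)`: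
it swaps `2t` and `2t+1` (0-indexed) for each `t < k`. -/
def pairFn (k : ℕ) : Fin (2 * k) → Fin (2 * k) := fun x =>
  if _ : (x : ℕ) % 2 = 0 then ⟨(x : ℕ) + 1, by have := x.2; omega⟩
  else ⟨(x : ℕ) - 1, by have := x.2; omega⟩

lemma pairFn_invol (k : ℕ) : Function.Involutive (pairFn k) := by
  intro x
  unfold pairFn
  split_ifs with h1 h2 h3
  · refine Fin.ext ?_; simp only [Fin.val_mk] at h2 ⊢; omega
  · refine Fin.ext ?_; simp only [Fin.val_mk] at h2 ⊢; omega
  · refine Fin.ext ?_; simp only [Fin.val_mk] at h3 ⊢; omega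
  · refine Fin.ext ?_; simp only [Fin.val_mk] at h3 ⊢; omega

/-- The permutation `(1 2)(3 4)⋯(2k-1 2k)` of `Fin (2k)`. -/
def pairPerm (k : ℕ) : Equiv.Perm (Fin (2 * k)) :=
  Function.Involutive.toPerm (pairFn k) (pairFn_invol k)

/-- `c₂` : the permutation matrix of `(1 2)(3 4)⋯(2k-1 2k)`. -/
def c2Mat (k : ℕ) : Matrix (Fin (2 * k)) (Fin (2 * k)) ℂ :=
  monoMat (2 * k) (pairPerm k) (fun _ => 1)

/-- The diagonal matrix `diag(-1,-1,1,…,1)`. -/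
def dMat (k : ℕ) : Matrix (Fin (2 * k)) (Fin (2 * k)) ℂ :=
  Matrix.diagonal fun t => if (t : ℕ) < 2 then (-1 : ℂ) else 1

/-- `c₁ = D · c₂`. -/
def c1Mat (k : ℕ) : Matrix (Fin (2 * k)) (Fin (2 * k)) ℂ := dMat k * c2Mat k

/-- Two matrices are conjugate by an element of `G(r,p,n)`. -/
def conjIn (r p n : ℕ) (c x : Matrix (Fin n) (Fin n) ℂ) : Prop :=
  ∃ g ∈ GSet r p n, g * c = x * g

/-- The conjugacy class of `c` in `G(r,p,n)`. -/
def conjClass (r p n : ℕ) (c : Matrix (Fin n) (Fin n) ℂ) :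
    Set (Matrix (Fin n) (Fin n) ℂ) :=
  {h | h ∈ GSet r p n ∧ conjIn r p n c h}

/-- The set partition of `{1,…,k,1′,…,k′}` all of whose blocks are singletons. -/
def singletonSP (k : ℕ) : SP k := ⟨Eq, eq_equivalence⟩

/-- The operator `M_{k,2,2} = φ_k(x_{d₀})` on `(ℂ^{2k})^{⊗k}`, where `d₀` is the set
partition with all blocks singletons. -/
def Mop (k : ℕ) : TP (2 * k) k →ₗ[ℂ] TP (2 * k) k :=
  phiX (2 * k) k (singletonSP k)


/-!
On basis tensors, an operator on `W` is a matrix indexed by labellings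
`c : {1,…,k+1,1′,…,(k+1)′} → {1,…,n}` with `c(k+1) = n`, and `φ(x_d)` is the indicator of
the labellings with `ker c = d`. Permutation matrices fixing `n` lie in `L(r,p,n)` and act
transitively on the labellings with a given kernel, so an `L(r,p,n)`-equivariant operator is
constant on these classes, i.e. a combination of the `φ(x_d)`. A diagonal matrix `a` of
`G(r,p,n)` multiplies the entry at `c` by `∏_v a_v^{N(v) - M(v)}`; the exponent vectors killed
by all such `a` are those constant modulo `r` and divisible by `m` (`Balanced`), and for
`ker c` this is exactly membership in `Π(r) ∪ Λ(r,p,n)`. Hence the entries outside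
`A(r,p,n)` vanish, and conversely `φ(x_d)` commutes with `G(r,p,n)` for `d ∈ A(r,p,n)`.
Distinct `d` with at most `n` blocks are realised by labellings, so their `φ(x_d)` have
disjoint nonempty supports; when `n ≥ 2k+1` this covers every `d ∈ A_{k+1/2}`.
-/
instance Setoid.finite {α : Type*} [Finite α] : Finite (Setoid α) :=
  Finite.of_injective (fun d : Setoid α => (d.r : α → α → Prop)) fun _ _ h =>
    Setoid.ext fun a b => Iff.of_eq (congrFun₂ h a b)

lemma ker_comp_of_injective {α β γ : Type*} {f : β → γ} (hf : Function.Injective f) (c : α → β) :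
    Setoid.ker (f ∘ c) = Setoid.ker c :=
  Setoid.ext fun _ _ => hf.eq_iff

section Labelling

variable {n t : ℕ}

lemma coeX_eq_ite (d : SP t) (c : Fin t ⊕ Fin t → Fin n) :
    coeX n t d c = if Setoid.ker c = d then 1 else 0 := by
  unfold coeX
  by_cases h : Setoid.ker c = d
  · subst h; simp [Setoid.ker_def]
  · rw [if_neg h, if_neg fun hd => h (Setoid.ext fun a b => (hd a b).symm)]

lemma nBlocks_ker (c : Fin t ⊕ Fin t → Fin n) :
    nBlocks (Setoid.ker c) = (Set.range c).ncard := by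
  rw [nBlocks, Nat.card_congr (Setoid.quotientKerEquivRange c), Nat.card_coe_set_eq]

lemma nBlocks_ker_le (c : Fin t ⊕ Fin t → Fin n) : nBlocks (Setoid.ker c) ≤ n := by
  simpa [nBlocks_ker] using Set.ncard_le_ncard (Set.subset_univ (Set.range c))

lemma nBlocks_ker_eq_iff (c : Fin t ⊕ Fin t → Fin n) :
    nBlocks (Setoid.ker c) = n ↔ Function.Surjective c := by
  rw [nBlocks_ker, ← Set.range_eq_univ]
  exact ⟨fun h => Set.eq_of_subset_of_ncard_le (Set.subset_univ _) (by simp [h]),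
    fun h => by simp [h]⟩

lemma phiX_eq_zero (d : SP t) (h : n < nBlocks d) : phiX n t d = 0 := by
  refine LinearMap.ext fun f => funext fun o => ?_
  refine Finset.sum_eq_zero fun i _ => ?_
  dsimp only
  rw [coeX_eq_ite, if_neg, zero_mul]
  rintro rfl
  exact h.not_ge (nBlocks_ker_le _)

lemma exists_perm_comp_eq_of_ker_eq {c c' : Fin t ⊕ Fin t → Fin n}
    (h : Setoid.ker c = Setoid.ker c') : ∃ π : Equiv.Perm (Fin n), π ∘ c = c' := by
  let e : Set.range c ≃ Set.range c' := (Setoid.quotientKerEquivRange c).symm.trans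
    ((Quotient.congrRight fun a b => by rw [h]).trans (Setoid.quotientKerEquivRange c'))
  refine ⟨e.extendSubtype, funext fun x => ?_⟩
  rw [Function.comp_apply, Equiv.extendSubtype_apply_of_mem e _ (Set.mem_range_self x)]
  have hx : (Setoid.quotientKerEquivRange c).symm ⟨c x, Set.mem_range_self x⟩ = ⟦x⟧ := by
    rw [Equiv.symm_apply_eq]; rfl
  simp only [e, Equiv.trans_apply, hx]
  rfl

lemma exists_ker_eq_of_nBlocks_le {d : SP t} (h : nBlocks d ≤ n) (x₀ : Fin t ⊕ Fin t)
    (v₀ : Fin n) : ∃ c : Fin t ⊕ Fin t → Fin n, c x₀ = v₀ ∧ Setoid.ker c = d := by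
  have := Fintype.ofFinite (Quotient d)
  obtain ⟨ι⟩ := Function.Embedding.nonempty_of_card_le (β := Fin n)
    (by simpa [nBlocks, Nat.card_eq_fintype_card] using h)
  refine ⟨Equiv.swap (ι ⟦x₀⟧) v₀ ∘ ι ∘ Quotient.mk d, by simp, ?_⟩
  rw [ker_comp_of_injective (Equiv.injective _), ker_comp_of_injective ι.injective]
  exact Setoid.ker_mk_eq d

end Labelling

section Excess

variable {n t : ℕ}

def excess (c : Fin t ⊕ Fin t → Fin n) (v : Fin n) : ℤ :=
  ((Finset.univ.filter fun s => c (Sum.inl s) = v).card : ℤ) -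
    (Finset.univ.filter fun s => c (Sum.inr s) = v).card

lemma topCt_sub_botCt_ker (c : Fin t ⊕ Fin t → Fin n) (x : Fin t ⊕ Fin t) :
    (topCt (Setoid.ker c) ⟦x⟧ : ℤ) - botCt (Setoid.ker c) ⟦x⟧ = excess c (c x) := by
  simp only [topCt, botCt, excess, Nat.card_eq_fintype_card, Fintype.card_subtype,
    Quotient.eq, Setoid.ker_def]

lemma excess_eq_zero_of_notMem_range {c : Fin t ⊕ Fin t → Fin n} {v : Fin n}
    (hv : v ∉ Set.range c) : excess c v = 0 := by
  have hempty : ∀ x, c x ≠ v := fun x hx => hv ⟨x, hx⟩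
  simp [excess, hempty]

lemma sum_card_filter_mul {α : Type*} [Fintype α] (f : α → Fin n) (E : Fin n → ℤ) :
    ∑ s, E (f s) = ∑ v, ((Finset.univ.filter fun s => f s = v).card : ℤ) * E v := by
  rw [← Finset.sum_fiberwise Finset.univ f]
  refine Finset.sum_congr rfl fun v _ => ?_
  rw [Finset.sum_congr rfl fun s hs => by rw [(Finset.mem_filter.mp hs).2], Finset.sum_const,
    nsmul_eq_mul]

lemma sum_inl_sub_sum_inr (c : Fin t ⊕ Fin t → Fin n) (E : Fin n → ℤ) :
    ∑ s, E (c (Sum.inl s)) - ∑ s, E (c (Sum.inr s)) = ∑ v, E v * excess c v := by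
  simp only [sum_card_filter_mul, excess, ← Finset.sum_sub_distrib]
  exact Finset.sum_congr rfl fun v _ => by ring

end Excess

section Balanced

variable {ι : Type*} [Fintype ι]

/-- For `m ∣ r`, the lattice `rℤ^ι + m(1,…,1)ℤ`. -/
def Balanced (r m : ℕ) (e : ι → ℤ) : Prop :=
  (∀ v w, e v ≡ e w [ZMOD r]) ∧ ∀ v, (m : ℤ) ∣ e v

lemma balanced_iff {r m : ℕ} (hr : r ≠ 0) (hm : m ∣ r) (e : ι → ℤ) :
    Balanced r m e ↔ ∀ E : ι → ℤ, (r : ℤ) ∣ m * ∑ v, E v → (r : ℤ) ∣ ∑ v, E v * e v := by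
  constructor
  · rintro ⟨hcong, hdvd⟩ E hE
    cases isEmpty_or_nonempty ι
    · simp
    obtain ⟨v₀⟩ := ‹Nonempty ι›
    obtain ⟨j, hj⟩ := hdvd v₀
    have hsplit : ∑ v, E v * e v = ∑ v, E v * (e v - e v₀) + j * (m * ∑ v, E v) := by
      rw [Finset.mul_sum, Finset.mul_sum, ← Finset.sum_add_distrib]
      exact Finset.sum_congr rfl fun v _ => by rw [hj]; ring
    rw [hsplit]
    exact dvd_add (Finset.dvd_sum fun v _ => dvd_mul_of_dvd_right (hcong v₀ v).dvd _)
      (dvd_mul_of_dvd_right hE _)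
  · intro h
    refine ⟨fun v w => Int.modEq_iff_dvd.mpr ?_, fun v => ?_⟩
    · have := h (Pi.single w 1 - Pi.single v 1) (by simp [Finset.sum_sub_distrib])
      simp only [Pi.sub_apply, sub_mul, Finset.sum_sub_distrib] at this
      simpa [Pi.single_apply] using this
    · obtain ⟨p, rfl⟩ := hm
      have hp : (p : ℤ) ≠ 0 := by simpa using right_ne_zero_of_mul hr
      have := h (Pi.single v (p : ℤ)) (by simp)
      rw [Nat.cast_mul] at this
      simpa [Pi.single_apply, mul_comm (p : ℤ), mul_dvd_mul_iff_right hp] using this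

end Balanced

section BlockConditions

variable {r p n t : ℕ}

lemma modEq_topCt_botCt_ker_iff (c : Fin t ⊕ Fin t → Fin n) (x : Fin t ⊕ Fin t) (m : ℤ) :
    (topCt (Setoid.ker c) ⟦x⟧ : ℤ) ≡ botCt (Setoid.ker c) ⟦x⟧ [ZMOD m] ↔ m ∣ excess c (c x) := by
  rw [Int.modEq_iff_dvd, ← dvd_neg, neg_sub, topCt_sub_botCt_ker]

lemma inPi_or_inLambda_ker_iff (hpr : p ∣ r) (c : Fin t ⊕ Fin t → Fin n) :
    inPi r (Setoid.ker c) ∨ inLambda r p n (Setoid.ker c) ↔ Balanced r (r / p) (excess c) := by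
  have hmr : ((r / p : ℕ) : ℤ) ∣ r := Int.natCast_dvd_natCast.mpr (Nat.div_dvd_of_dvd hpr)
  constructor
  · rintro (hPi | ⟨hcard, hblock, hdiff⟩)
    · have hr : ∀ v, (r : ℤ) ∣ excess c v := by
        intro v
        by_cases hv : v ∈ Set.range c
        · obtain ⟨x, rfl⟩ := hv
          exact (modEq_topCt_botCt_ker_iff c x r).mp (hPi ⟦x⟧)
        · rw [excess_eq_zero_of_notMem_range hv]
          exact dvd_zero _
      exact ⟨fun v w => Int.modEq_iff_dvd.mpr (dvd_sub (hr w) (hr v)),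
        fun v => hmr.trans (hr v)⟩
    · have hsurj := (nBlocks_ker_eq_iff c).mp hcard
      refine ⟨fun v w => ?_, fun v => ?_⟩
      · obtain ⟨x, rfl⟩ := hsurj v
        obtain ⟨y, rfl⟩ := hsurj w
        simpa only [topCt_sub_botCt_ker] using hdiff ⟦x⟧ ⟦y⟧
      · obtain ⟨x, rfl⟩ := hsurj v
        exact (modEq_topCt_botCt_ker_iff c x _).mp (hblock ⟦x⟧).1
  · rintro ⟨hcong, hdvd⟩
    by_cases h0 : ∀ v, (r : ℤ) ∣ excess c v
    · exact Or.inl fun q => q.inductionOn fun x => (modEq_topCt_botCt_ker_iff c x r).mpr (h0 _)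
    obtain ⟨v₀, hv₀⟩ := not_forall.mp h0
    have hndvd : ∀ v, ¬ (r : ℤ) ∣ excess c v := fun v hv =>
      hv₀ (by simpa using dvd_add (hcong v v₀).dvd hv)
    have hsurj : Function.Surjective c := fun v => by
      by_contra hv
      exact hndvd v (by rw [excess_eq_zero_of_notMem_range hv]; exact dvd_zero _)
    refine Or.inr ⟨(nBlocks_ker_eq_iff c).mpr hsurj, fun q => q.inductionOn fun x => ?_,
      fun q q' => q.inductionOn fun x => q'.inductionOn fun y => ?_⟩
    · simp only [modEq_topCt_botCt_ker_iff]
      exact ⟨hdvd _, hndvd _⟩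
    · simpa only [topCt_sub_botCt_ker] using hcong (c x) (c y)

lemma inA_ker_iff (hpr : p ∣ r) (c : Fin t ⊕ Fin t → Fin n) :
    inA r p n (Setoid.ker c) ↔ Balanced r (r / p) (excess c) := by
  rw [← inPi_or_inLambda_ker_iff hpr, inA, ← or_assoc, or_iff_left_iff_imp]
  exact fun h => absurd h.1 (nBlocks_ker_le c).not_gt

end BlockConditions

section Phases

variable {r m n t : ℕ}

lemma zpow_sum₀ {α G₀ : Type*} [CommGroupWithZero G₀] {x : G₀} (hx : x ≠ 0) (s : Finset α)
    (f : α → ℤ) : x ^ ∑ i ∈ s, f i = ∏ i ∈ s, x ^ f i := by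
  induction s using Finset.induction_on with
  | empty => simp
  | insert a s ha ih => rw [Finset.sum_insert ha, Finset.prod_insert ha, zpow_add₀ hx, ih]

lemma isPrimitiveRoot_zeta (hr : r ≠ 0) : IsPrimitiveRoot (zeta r) r :=
  Complex.isPrimitiveRoot_exp r hr

lemma prod_zeta_zpow_inl_eq_iff (hr : r ≠ 0) (c : Fin t ⊕ Fin t → Fin n) (E : Fin n → ℤ) :
    ∏ s, zeta r ^ E (c (Sum.inl s)) = ∏ s, zeta r ^ E (c (Sum.inr s)) ↔
      (r : ℤ) ∣ ∑ v, E v * excess c v := by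
  rw [← zpow_sum₀ (zeta_ne_zero r), ← zpow_sum₀ (zeta_ne_zero r), ← sum_inl_sub_sum_inr,
    ← (isPrimitiveRoot_zeta hr).zpow_eq_one_iff_dvd, zpow_sub₀ (zeta_ne_zero r),
    div_eq_one_iff_eq (zpow_ne_zero _ (zeta_ne_zero r))]

lemma zeta_zpow_pow_self (hr : r ≠ 0) (j : ℤ) : (zeta r ^ j) ^ r = 1 := by
  rw [← zpow_natCast, ← _root_.zpow_mul, mul_comm, _root_.zpow_mul, zpow_natCast,
    zeta_pow_self (Nat.pos_of_ne_zero hr), _root_.one_zpow]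

lemma prod_inl_eq_prod_inr_of_balanced (hr : r ≠ 0) (hm : m ∣ r) {c : Fin t ⊕ Fin t → Fin n}
    (hc : Balanced r m (excess c)) {a : Fin n → ℂ} (ha : ∀ v, a v ^ r = 1)
    (hprod : (∏ v, a v) ^ m = 1) : ∏ s, a (c (Sum.inl s)) = ∏ s, a (c (Sum.inr s)) := by
  have : NeZero r := ⟨hr⟩
  choose E hE using fun v => (isPrimitiveRoot_zeta hr).eq_pow_of_pow_eq_one (ha v)
  obtain rfl : a = fun v => zeta r ^ (E v : ℤ) := funext fun v => by simp [hE v]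
  refine (prod_zeta_zpow_inl_eq_iff hr c (fun v => E v)).mpr
    ((balanced_iff hr hm _).mp hc _ ?_)
  rwa [← (isPrimitiveRoot_zeta hr).zpow_eq_one_iff_dvd, mul_comm, _root_.zpow_mul,
    zpow_sum₀ (zeta_ne_zero r), zpow_natCast]

lemma exists_prod_inl_ne_prod_inr (hr : r ≠ 0) (hm : m ∣ r) {c : Fin t ⊕ Fin t → Fin n}
    (hc : ¬ Balanced r m (excess c)) :
    ∃ a : Fin n → ℂ, (∀ v, a v ^ r = 1) ∧ (∏ v, a v) ^ m = 1 ∧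
      ∏ s, a (c (Sum.inl s)) ≠ ∏ s, a (c (Sum.inr s)) := by
  obtain ⟨E, hE, hne⟩ : ∃ E : Fin n → ℤ, (r : ℤ) ∣ m * ∑ v, E v ∧
      ¬ (r : ℤ) ∣ ∑ v, E v * excess c v := by
    simpa [balanced_iff hr hm] using hc
  refine ⟨fun v => zeta r ^ E v, fun v => zeta_zpow_pow_self hr _, ?_,
    mt (prod_zeta_zpow_inl_eq_iff hr c E).mp hne⟩
  rw [← zpow_sum₀ (zeta_ne_zero r), ← zpow_natCast, ← _root_.zpow_mul, mul_comm,
    (isPrimitiveRoot_zeta hr).zpow_eq_one_iff_dvd]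
  exact hE

end Phases

section MonomialAction

variable {n t : ℕ}

lemma kernelMap_single (K : (Fin t → Fin n) → (Fin t → Fin n) → ℂ) (i o : Fin t → Fin n) :
    kernelMap n t K (Pi.single i 1) o = K o i := by
  simp [kernelMap, Pi.single_apply]

lemma tensorPow_monoMat_single (π : Equiv.Perm (Fin n)) (a : Fin n → ℂ) (i : Fin t → Fin n) :
    tensorPow n t (monoMat n π a) (Pi.single i 1) = (∏ s, a (i s)) • Pi.single (π ∘ i) 1 := by
  funext o
  simp only [tensorPow, kernelMap_single, monoMat, Matrix.of_apply, Finset.prod_ite_zero,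
    Pi.smul_apply, Pi.single_apply, funext_iff, Function.comp_apply]
  simp

lemma tensorPow_monoMat_apply_comp (π : Equiv.Perm (Fin n)) (a : Fin n → ℂ) (f : TP n t)
    (o : Fin t → Fin n) : tensorPow n t (monoMat n π a) f (π ∘ o) = (∏ s, a (o s)) * f o := by
  simp only [tensorPow, kernelMap, LinearMap.coe_mk, AddHom.coe_mk, monoMat, Matrix.of_apply,
    Function.comp_apply, π.injective.eq_iff, Finset.prod_ite_zero]
  rw [Fintype.sum_eq_single o fun i hi => by
    rw [if_neg fun h => hi (funext fun s => (h s (Finset.mem_univ s)).symm), zero_mul]]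
  simp

lemma kernelMap_comp_tensorPow_monoMat {K : (Fin t → Fin n) → (Fin t → Fin n) → ℂ}
    {π : Equiv.Perm (Fin n)} {a : Fin n → ℂ}
    (h : ∀ i o, (∏ s, a (i s)) * K (π ∘ o) (π ∘ i) = (∏ s, a (o s)) * K o i) :
    kernelMap n t K ∘ₗ tensorPow n t (monoMat n π a) =
      tensorPow n t (monoMat n π a) ∘ₗ kernelMap n t K := by
  refine (Pi.basisFun ℂ (Fin t → Fin n)).ext fun i => funext fun o' => ?_
  obtain ⟨o, rfl⟩ := π.surjective.comp_left o'
  simp only [Pi.basisFun_apply, LinearMap.comp_apply, tensorPow_monoMat_single, map_smul,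
    tensorPow_monoMat_apply_comp, Pi.smul_apply, smul_eq_mul, kernelMap_single]
  exact h i o

lemma phiX_comp_tensorPow {r p : ℕ} (hr : 0 < r) (hpr : p ∣ r) {d : SP t} (hd : inA r p n d)
    {g : Matrix (Fin n) (Fin n) ℂ} (hg : g ∈ GSet r p n) :
    phiX n t d ∘ₗ tensorPow n t g = tensorPow n t g ∘ₗ phiX n t d := by
  obtain ⟨π, a, ha, hprod, rfl⟩ := hg
  refine kernelMap_comp_tensorPow_monoMat fun i o => ?_
  rw [← Sum.comp_elim, coeX_eq_ite, coeX_eq_ite, ker_comp_of_injective π.injective]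
  split_ifs with h
  · subst h
    simpa using prod_inl_eq_prod_inr_of_balanced hr.ne' (Nat.div_dvd_of_dvd hpr)
      ((inA_ker_iff hpr _).mp hd) ha hprod
  · simp

end MonomialAction

section Wsub

variable {r p n k : ℕ} (hn : 0 < n)

lemma apply_lastIdx_eq_zero_of_mem_LSet {g : Matrix (Fin n) (Fin n) ℂ} (hg : g ∈ LSet r p n hn)
    {x : Fin n} (hx : x ≠ lastIdx n hn) : g x (lastIdx n hn) = 0 := by
  obtain ⟨⟨π, a, -, -, rfl⟩, hlast⟩ := hg
  simp [monoMat, (monoMat_last hn π a hlast).1, hx]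

lemma tensorPow_mapsTo_Wsub {g : Matrix (Fin n) (Fin n) ℂ} (hg : g ∈ LSet r p n hn) :
    ∀ f ∈ Wsub n k hn, tensorPow n (k + 1) g f ∈ Wsub n k hn := by
  intro f hf o ho
  refine Finset.sum_eq_zero fun i _ => ?_
  dsimp only
  by_cases hi : i (Fin.last k) = lastIdx n hn
  · rw [Finset.prod_eq_zero (Finset.mem_univ (Fin.last k)), zero_mul]
    rw [hi]
    exact apply_lastIdx_eq_zero_of_mem_LSet hn hg ho
  · rw [hf i hi, mul_zero]

lemma phiX_mapsTo_Wsub {d : SP (k + 1)} (hd : isHalf k d) :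
    ∀ f ∈ Wsub n k hn, phiX n (k + 1) d f ∈ Wsub n k hn := by
  intro f hf o ho
  refine Finset.sum_eq_zero fun i _ => ?_
  dsimp only
  rw [coeX_eq_ite]
  split_ifs with h
  · subst h
    rw [hf i (hd.trans_ne ho), mul_zero]
  · rw [zero_mul]

def eW (i : Fin (k + 1) → Fin n) (hi : i (Fin.last k) = lastIdx n hn) : Wsub n k hn :=
  ⟨Pi.single i 1, fun _ hj => Pi.single_eq_of_ne (by rintro rfl; exact hj hi) 1⟩

lemma sum_smul_eW (x : Wsub n k hn) :
    ∑ i : {i : Fin (k + 1) → Fin n // i (Fin.last k) = lastIdx n hn},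
      (x : TP n (k + 1)) i • eW hn i.1 i.2 = x := by
  refine Subtype.ext (funext fun o => ?_)
  simp only [Submodule.coe_sum, Submodule.coe_smul, eW, Finset.sum_apply, Pi.smul_apply,
    Pi.single_apply, smul_eq_mul, mul_ite, mul_one, mul_zero]
  by_cases ho : o (Fin.last k) = lastIdx n hn
  · rw [Fintype.sum_eq_single ⟨o, ho⟩ fun i hi => if_neg fun h => hi (Subtype.ext h.symm)]
    simp
  · rw [x.2 o ho]
    exact Finset.sum_eq_zero fun i _ => if_neg fun h : o = i.1 => ho (h ▸ i.2)

lemma linearMap_ext_eW {F G : Wsub n k hn →ₗ[ℂ] Wsub n k hn}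
    (h : ∀ i hi o, o (Fin.last k) = lastIdx n hn →
      (F (eW hn i hi) : TP n (k + 1)) o = (G (eW hn i hi) : TP n (k + 1)) o) : F = G := by
  refine LinearMap.ext fun x => ?_
  rw [← sum_smul_eW hn x, map_sum, map_sum]
  refine Finset.sum_congr rfl fun i _ => ?_
  rw [map_smul, map_smul]
  congr 1
  refine Subtype.ext (funext fun o => ?_)
  by_cases ho : o (Fin.last k) = lastIdx n hn
  · exact h _ _ o ho
  · rw [(F _).2 o ho, (G _).2 o ho]

lemma phiX_single_apply (d : SP (k + 1)) (i o : Fin (k + 1) → Fin n) :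
    phiX n (k + 1) d (Pi.single i 1) o = if Setoid.ker (Sum.elim i o) = d then 1 else 0 := by
  rw [phiX, kernelMap_single, coeX_eq_ite]

end Wsub

section Equivariant

variable {r p n k : ℕ} (hn : 0 < n)

lemma diag_mem_LSet (hr : 0 < r) {a : Fin n → ℂ} (ha : ∀ v, a v ^ r = 1)
    (hprod : (∏ v, a v) ^ (r / p) = 1) : monoMat n 1 a ∈ LSet r p n hn :=
  ⟨⟨1, a, ha, hprod, rfl⟩, by rw [monoMat_last_entry hn 1 a rfl]; exact a_ne_zero hr (ha _)⟩

lemma perm_mem_LSet {π : Equiv.Perm (Fin n)} (hπ : π (lastIdx n hn) = lastIdx n hn) :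
    monoMat n π (fun _ => 1) ∈ LSet r p n hn :=
  ⟨⟨π, fun _ => 1, fun _ => one_pow r, by simp, rfl⟩, by simp [monoMat_last_entry hn π _ hπ]⟩

/-- Membership in `End_{L(r,p,n)}(W)`. -/
def IsLEquivariant (r p : ℕ) (F : Wsub n k hn →ₗ[ℂ] Wsub n k hn) : Prop :=
  ∀ g (hg : g ∈ LSet r p n hn),
    F ∘ₗ (tensorPow n (k + 1) g).restrict (tensorPow_mapsTo_Wsub hn hg) =
      (tensorPow n (k + 1) g).restrict (tensorPow_mapsTo_Wsub hn hg) ∘ₗ F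

variable {hn}

lemma prod_mul_apply_eW_comp {F : Wsub n k hn →ₗ[ℂ] Wsub n k hn} {π : Equiv.Perm (Fin n)}
    {a : Fin n → ℂ} (hπ : π (lastIdx n hn) = lastIdx n hn)
    {hg : ∀ f ∈ Wsub n k hn, tensorPow n (k + 1) (monoMat n π a) f ∈ Wsub n k hn}
    (hF : F ∘ₗ (tensorPow n (k + 1) (monoMat n π a)).restrict hg =
      (tensorPow n (k + 1) (monoMat n π a)).restrict hg ∘ₗ F)
    (c : Fin (k + 1) ⊕ Fin (k + 1) → Fin n) (hc : c (Sum.inl (Fin.last k)) = lastIdx n hn) :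
    (∏ s, a (c (Sum.inl s))) *
        (F (eW hn (π ∘ c ∘ Sum.inl) (by simp [hc, hπ])) : TP n (k + 1)) (π ∘ c ∘ Sum.inr) =
      (∏ s, a (c (Sum.inr s))) * (F (eW hn (c ∘ Sum.inl) hc) : TP n (k + 1)) (c ∘ Sum.inr) := by
  have hgc : (tensorPow n (k + 1) (monoMat n π a)).restrict hg (eW hn (c ∘ Sum.inl) hc) =
      (∏ s, a (c (Sum.inl s))) • eW hn (π ∘ c ∘ Sum.inl) (by simp [hc, hπ]) :=
    Subtype.ext (tensorPow_monoMat_single π a _)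
  have := congrArg (fun G => (G (eW hn (c ∘ Sum.inl) hc) : TP n (k + 1)) (π ∘ c ∘ Sum.inr)) hF
  simpa only [LinearMap.comp_apply, hgc, map_smul, LinearMap.restrict_apply,
    Submodule.coe_smul, Pi.smul_apply, smul_eq_mul, tensorPow_monoMat_apply_comp,
    Function.comp_apply] using this

lemma apply_eW_eq_zero_of_not_inA (hr : 0 < r) (hpr : p ∣ r) {F : Wsub n k hn →ₗ[ℂ] Wsub n k hn}
    (hF : IsLEquivariant hn r p F) {c : Fin (k + 1) ⊕ Fin (k + 1) → Fin n}
    (hc : c (Sum.inl (Fin.last k)) = lastIdx n hn) (hA : ¬ inA r p n (Setoid.ker c)) :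
    (F (eW hn (c ∘ Sum.inl) hc) : TP n (k + 1)) (c ∘ Sum.inr) = 0 := by
  obtain ⟨a, ha, hprod, hne⟩ := exists_prod_inl_ne_prod_inr hr.ne' (Nat.div_dvd_of_dvd hpr)
    (mt (inA_ker_iff hpr c).mpr hA)
  have h : (∏ s, a (c (Sum.inl s))) * (F (eW hn (c ∘ Sum.inl) hc) : TP n (k + 1)) (c ∘ Sum.inr) =
      (∏ s, a (c (Sum.inr s))) * (F (eW hn (c ∘ Sum.inl) hc) : TP n (k + 1)) (c ∘ Sum.inr) :=
    prod_mul_apply_eW_comp rfl (hF _ (diag_mem_LSet hn hr ha hprod)) c hc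
  rw [← sub_eq_zero, ← sub_mul] at h
  exact (mul_eq_zero.mp h).resolve_left (sub_ne_zero.mpr hne)

lemma apply_eW_eq_of_ker_eq {F : Wsub n k hn →ₗ[ℂ] Wsub n k hn} (hF : IsLEquivariant hn r p F)
    {c c' : Fin (k + 1) ⊕ Fin (k + 1) → Fin n} (hc : c (Sum.inl (Fin.last k)) = lastIdx n hn)
    (hc' : c' (Sum.inl (Fin.last k)) = lastIdx n hn) (h : Setoid.ker c = Setoid.ker c') :
    (F (eW hn (c ∘ Sum.inl) hc) : TP n (k + 1)) (c ∘ Sum.inr) =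
      (F (eW hn (c' ∘ Sum.inl) hc') : TP n (k + 1)) (c' ∘ Sum.inr) := by
  obtain ⟨π, rfl⟩ := exists_perm_comp_eq_of_ker_eq h
  have hπ : π (lastIdx n hn) = lastIdx n hn := hc ▸ hc'
  have h := prod_mul_apply_eW_comp hπ (hF _ (perm_mem_LSet hn hπ)) c hc
  rw [Finset.prod_const_one, one_mul, one_mul] at h
  exact h.symm

end Equivariant

section Centralizer

variable {r p n k : ℕ} {hn : 0 < n}

lemma isLEquivariant_of_mem_span (hr : 0 < r) (hpr : p ∣ r) {F : Wsub n k hn →ₗ[ℂ] Wsub n k hn}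
    (hF : F ∈ Submodule.span ℂ {T | ∃ d : SP (k + 1), ∃ h : inA r p n d ∧ isHalf k d,
      T = (phiX n (k + 1) d).restrict (phiX_mapsTo_Wsub hn h.2)}) :
    IsLEquivariant hn r p F := by
  induction hF using Submodule.span_induction with
  | mem T hT =>
    obtain ⟨d, hd, rfl⟩ := hT
    exact fun g hg => LinearMap.ext fun x =>
      Subtype.ext (LinearMap.congr_fun (phiX_comp_tensorPow hr hpr hd.1 hg.1) x)
  | zero => intro g hg; rw [LinearMap.zero_comp, LinearMap.comp_zero]
  | add T₁ T₂ _ _ h₁ h₂ =>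
    intro g hg; rw [LinearMap.add_comp, LinearMap.comp_add, h₁ g hg, h₂ g hg]
  | smul a T _ h => intro g hg; rw [LinearMap.smul_comp, LinearMap.comp_smul, h g hg]

lemma mem_span_of_isLEquivariant (hr : 0 < r) (hpr : p ∣ r) {F : Wsub n k hn →ₗ[ℂ] Wsub n k hn}
    (hF : IsLEquivariant hn r p F) :
    F ∈ Submodule.span ℂ {T | ∃ d : SP (k + 1), ∃ h : inA r p n d ∧ isHalf k d,
      T = (phiX n (k + 1) d).restrict (phiX_mapsTo_Wsub hn h.2)} := by
  have := Fintype.ofFinite {d : SP (k + 1) // isHalf k d}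
  let Realizes (d : SP (k + 1)) (c : Fin (k + 1) ⊕ Fin (k + 1) → Fin n) : Prop :=
    c (Sum.inl (Fin.last k)) = lastIdx n hn ∧ Setoid.ker c = d
  -- the coefficient of `φ(x_d)` in `F` is the entry of `F` at any labelling realising `d`
  let coef (d : SP (k + 1)) : ℂ := if h : ∃ c, Realizes d c then
    (F (eW hn (h.choose ∘ Sum.inl) h.choose_spec.1) : TP n (k + 1)) (h.choose ∘ Sum.inr) else 0
  have hcoef : ∀ c hc,
      coef (Setoid.ker c) = (F (eW hn (c ∘ Sum.inl) hc) : TP n (k + 1)) (c ∘ Sum.inr) := by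
    intro c hc
    have h : ∃ c', Realizes (Setoid.ker c) c' := ⟨c, hc, rfl⟩
    simp only [coef, dif_pos h]
    exact apply_eW_eq_of_ker_eq hF _ _ h.choose_spec.2
  have hcoef_zero : ∀ d, ¬ inA r p n d → coef d = 0 := by
    intro d hd
    simp only [coef]
    split_ifs with h
    · exact apply_eW_eq_zero_of_not_inA hr hpr hF _ (by rwa [h.choose_spec.2])
    · rfl
  have hsum : F = ∑ d : {d // isHalf k d},
      coef d • (phiX n (k + 1) d.1).restrict (phiX_mapsTo_Wsub hn d.2) := by
    refine linearMap_ext_eW hn fun i hi o ho => ?_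
    simp only [LinearMap.sum_apply, LinearMap.smul_apply, Submodule.coe_sum, Submodule.coe_smul,
      Finset.sum_apply, Pi.smul_apply, LinearMap.restrict_apply, eW, phiX_single_apply,
      smul_eq_mul, mul_ite, mul_one, mul_zero]
    rw [Fintype.sum_eq_single ⟨Setoid.ker (Sum.elim i o), hi.trans ho.symm⟩
      fun d hd => if_neg fun h => hd (Subtype.ext h.symm), if_pos rfl]
    exact (hcoef (Sum.elim i o) hi).symm
  rw [hsum]
  refine Submodule.sum_mem _ fun d _ => ?_
  by_cases hA : inA r p n d.1
  · exact Submodule.smul_mem _ _ (Submodule.subset_span ⟨d.1, ⟨hA, d.2⟩, rfl⟩)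
  · rw [hcoef_zero d hA, zero_smul]
    exact Submodule.zero_mem _

lemma nBlocks_lt_of_isHalf {d : SP (k + 1)} (hd : isHalf k d) : nBlocks d < 2 * (k + 1) := by
  have := Fintype.ofFinite (Quotient d)
  rw [nBlocks, Nat.card_eq_fintype_card]
  simpa [two_mul] using Fintype.card_lt_of_surjective_not_injective (Quotient.mk d)
    Quotient.mk_surjective fun h => Sum.inl_ne_inr (h (Quotient.sound hd))

variable (hn)

lemma linearIndependent_phiX_restrict :
    LinearIndependent ℂ fun d : {d : SP (k + 1) // isHalf k d ∧ nBlocks d ≤ n} =>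
      (phiX n (k + 1) d.1).restrict (phiX_mapsTo_Wsub hn d.2.1) := by
  refine linearIndependent_iff'ₛ.mpr fun s f g hfg d hd => ?_
  obtain ⟨c, hc, hcd⟩ := exists_ker_eq_of_nBlocks_le d.2.2 (Sum.inl (Fin.last k)) (lastIdx n hn)
  have := congrArg (fun G => (G (eW hn (c ∘ Sum.inl) hc) : TP n (k + 1)) (c ∘ Sum.inr)) hfg
  simp only [LinearMap.sum_apply, LinearMap.smul_apply, Submodule.coe_sum, Submodule.coe_smul,
    Finset.sum_apply, Pi.smul_apply, LinearMap.restrict_apply, eW, phiX_single_apply,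
    Sum.elim_comp_inl_inr, smul_eq_mul, mul_ite, mul_one, mul_zero, hcd, ← Subtype.ext_iff,
    Finset.sum_ite_eq, if_pos hd] at this
  exact this

end Centralizer

theorem statement1_general (r p n k : ℕ) (hr : 0 < r) (hn : 0 < n) (hpr : p ∣ r)
    (hinv : ∀ d : SP (k + 1), isHalf k d →
      ∀ f ∈ Wsub n k hn, phiX n (k + 1) d f ∈ Wsub n k hn)
    (hLinv : ∀ g ∈ LSet r p n hn,
      ∀ f ∈ Wsub n k hn, tensorPow n (k + 1) g f ∈ Wsub n k hn) :
    ((Submodule.span ℂ {T : ↥(Wsub n k hn) →ₗ[ℂ] ↥(Wsub n k hn) |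
        ∃ d : SP (k + 1), ∃ h : inA r p n d ∧ isHalf k d,
          T = (phiX n (k + 1) d).restrict (hinv d h.2)} :
        Submodule ℂ (↥(Wsub n k hn) →ₗ[ℂ] ↥(Wsub n k hn))) :
        Set (↥(Wsub n k hn) →ₗ[ℂ] ↥(Wsub n k hn)))
      = {F : ↥(Wsub n k hn) →ₗ[ℂ] ↥(Wsub n k hn) |
          ∀ g, ∀ hg : g ∈ LSet r p n hn,
            F ∘ₗ (tensorPow n (k + 1) g).restrict (hLinv g hg)
              = (tensorPow n (k + 1) g).restrict (hLinv g hg) ∘ₗ F} ∧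
    (∀ d : SP (k + 1), inA r p n d → ∀ hh : isHalf k d, n < nBlocks d →
        (phiX n (k + 1) d).restrict (hinv d hh) = 0) ∧
    (2 * k + 1 ≤ n →
      LinearIndependent ℂ fun d : {d : SP (k + 1) // inA r p n d ∧ isHalf k d} =>
        (phiX n (k + 1) d.1).restrict (hinv d.1 d.2.2)) := by
  refine ⟨Set.Subset.antisymm (fun F hF => isLEquivariant_of_mem_span hr hpr hF)
    (fun F hF => mem_span_of_isLEquivariant hr hpr hF), ?_, fun hkn => ?_⟩
  · intro d _ hd hbig
    exact LinearMap.ext fun x => Subtype.ext (LinearMap.congr_fun (phiX_eq_zero d hbig) x)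
  · have hblocks (d : SP (k + 1)) (hd : isHalf k d) : nBlocks d ≤ n := by
      have := nBlocks_lt_of_isHalf hd
      omega
    let toBounded (d : {d : SP (k + 1) // inA r p n d ∧ isHalf k d}) :
        {d : SP (k + 1) // isHalf k d ∧ nBlocks d ≤ n} := ⟨d.1, d.2.2, hblocks d.1 d.2.2⟩
    exact (linearIndependent_phiX_restrict hn).comp toBounded
      fun d d' h => Subtype.ext (congrArg (fun d => d.1) h)

/-- The span of the restrictions `φ_{k+1}(x_d)|_W`, for
`d ∈ A_{k+1/2}(r,p,n)`, equals the centralizer algebra `End_{L(r,p,n)}(W)`; the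
restrictions with more than `n` blocks vanish; and for `n ≥ 2k+1` the family is
linearly independent.  (The invariance of `W` under the `φ`'s and under the diagonal
`L(r,p,n)`-action, a fact recorded in the paper, is supplied as a hypothesis so that
the restricted maps can be formed.) -/
theorem statement1 (r p n k : ℕ) (hr : 0 < r) (hp : 0 < p) (hn : 0 < n) (hpr : p ∣ r)
    (hinv : ∀ d : SP (k + 1), isHalf k d →
      ∀ f ∈ Wsub n k hn, phiX n (k + 1) d f ∈ Wsub n k hn)
    (hLinv : ∀ g ∈ LSet r p n hn,
      ∀ f ∈ Wsub n k hn, tensorPow n (k + 1) g f ∈ Wsub n k hn) :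
    ((Submodule.span ℂ {T : ↥(Wsub n k hn) →ₗ[ℂ] ↥(Wsub n k hn) |
        ∃ d : SP (k + 1), ∃ h : inA r p n d ∧ isHalf k d,
          T = (phiX n (k + 1) d).restrict (hinv d h.2)} :
        Submodule ℂ (↥(Wsub n k hn) →ₗ[ℂ] ↥(Wsub n k hn))) :
        Set (↥(Wsub n k hn) →ₗ[ℂ] ↥(Wsub n k hn)))
      = {F : ↥(Wsub n k hn) →ₗ[ℂ] ↥(Wsub n k hn) |
          ∀ g, ∀ hg : g ∈ LSet r p n hn,
            F ∘ₗ (tensorPow n (k + 1) g).restrict (hLinv g hg)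
              = (tensorPow n (k + 1) g).restrict (hLinv g hg) ∘ₗ F} ∧
    (∀ d : SP (k + 1), inA r p n d → ∀ hh : isHalf k d, n < nBlocks d →
        (phiX n (k + 1) d).restrict (hinv d hh) = 0) ∧
    (2 * k + 1 ≤ n →
      LinearIndependent ℂ fun d : {d : SP (k + 1) // inA r p n d ∧ isHalf k d} =>
        (phiX n (k + 1) d.1).restrict (hinv d.1 d.2.2)) :=
  statement1_general r p n k hr hn hpr hinv hLinv

end Tanabe
end
end

section
/- Let k be a positive integer and set n = 2k. Let C_1 and C_2 be the conjugacy classes of c_1 and c_2, respectively, in G(2,2,2k). Then, as endomorphisms of V^{⊗k} = (ℂ^{2k})^{⊗k}, Σ_{g ∈ C_2} g^{⊗k} − Σ_{g ∈ C_1} g^{⊗k} = 2^k · M_{k,2,2}. -/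
/-!
Both classes consist of the monomial matrices `monoMat π a` with `π` a fixed-point-free
involution and `±1` weights `a` constant on the 2-cycles of `π`; they are told apart by the sign
`∏ a ρ` over the smaller points `ρ` of the 2-cycles, which conjugation by `monoMat σ b` multiplies
by `∏ b = 1`. Encoding `a` by the set `S` of 2-cycles carrying weight `-1`, the `(o, i)` coefficient
of the difference of the two sums is `∑ (-1)^|S| ∏ₜ a (i t)` over all `(π, S)` with `o = π ∘ i`.
Summing over `S` gives `∏ (1 - (-1)^m)` over the 2-cycles, `m` counting the `t` with `i t` in the
cycle: this is `2^k` if every 2-cycle contains exactly one `i t`, i.e. if the `2k` indices of `i`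
and `o` are distinct (and then `π` is unique), and `0` otherwise.
-/

open scoped Classical
open Matrix

noncomputable section

namespace Tanabe

open Equiv Finset

section Involution

variable {α : Type*}

def IsFixedPointFreeInvolution (π : Perm α) : Prop :=
  Function.Involutive π ∧ ∀ x, π x ≠ x

namespace IsFixedPointFreeInvolution

variable {π : Perm α} (hπ : IsFixedPointFreeInvolution π)
include hπ

lemma conj (σ : Perm α) : IsFixedPointFreeInvolution (σ * π * σ⁻¹) := by
  refine ⟨fun x => by simp [hπ.1 _], fun x hx => hπ.2 (σ⁻¹ x) ?_⟩
  simpa using congrArg (⇑σ⁻¹) hx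

lemma cycleType_eq [Fintype α] [DecidableEq α] :
    π.cycleType = Multiset.replicate (Fintype.card α / 2) 2 := by
  have hmem : ∀ n ∈ π.cycleType, n = 2 := fun n hn =>
    le_antisymm (Nat.le_of_dvd two_pos ((Perm.dvd_of_mem_cycleType hn).trans
      (orderOf_dvd_of_pow_eq_one (Perm.ext fun x => hπ.1 x))))
      (Perm.two_le_of_mem_cycleType hn)
  have hsum : π.cycleType.sum = Fintype.card α := by
    rw [Perm.sum_cycleType, Finset.eq_univ_of_forall fun x => Perm.mem_support.2 (hπ.2 x),
      card_univ]
  rw [Multiset.eq_replicate_card.2 hmem, Multiset.sum_replicate, smul_eq_mul] at hsum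
  rw [Multiset.eq_replicate_card.2 hmem, ← hsum, Nat.mul_div_cancel _ two_pos]

lemma exists_conj_eq [Fintype α] [DecidableEq α] {π' : Perm α}
    (hπ' : IsFixedPointFreeInvolution π') : ∃ σ : Perm α, σ * π * σ⁻¹ = π' :=
  isConj_iff.1 (Perm.isConj_iff_cycleType_eq.2 (hπ.cycleType_eq.trans hπ'.cycleType_eq.symm))

lemma min_apply_eq [LinearOrder α] (x : α) : min (π x) (π (π x)) = min x (π x) := by
  rw [hπ.1 x, min_comm]

end IsFixedPointFreeInvolution

variable [Fintype α] [LinearOrder α]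

def pairMins (π : Perm α) : Finset α := univ.filter fun x => x < π x

lemma mem_pairMins {π : Perm α} {x : α} : x ∈ pairMins π ↔ x < π x := by
  simp [pairMins]

namespace IsFixedPointFreeInvolution

variable {π : Perm α} (hπ : IsFixedPointFreeInvolution π)
include hπ

lemma min_mem_pairMins (x : α) : min x (π x) ∈ pairMins π := by
  rcases (hπ.2 x).lt_or_gt with h | h
  · rw [min_eq_right h.le, mem_pairMins, hπ.1 x]; exact h
  · rw [min_eq_left h.le, mem_pairMins]; exact h

lemma image_pairMins : (pairMins π).image π = univ.filter fun x => ¬ x < π x := by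
  ext x
  rw [mem_image, mem_filter]
  simp only [mem_pairMins, mem_univ, true_and]
  constructor
  · rintro ⟨ρ, hρ, rfl⟩
    rw [hπ.1 ρ]
    exact not_lt.2 hρ.le
  · intro hx
    exact ⟨π x, by rw [hπ.1 x]; exact lt_of_le_of_ne (not_lt.1 hx) (hπ.2 x), hπ.1 x⟩

lemma prod_eq_prod_pairMins {M : Type*} [CommMonoid M] (f : α → M) :
    ∏ x, f x = ∏ ρ ∈ pairMins π, f ρ * f (π ρ) := by
  rw [prod_mul_distrib, ← prod_image (s := pairMins π) π.injective.injOn, hπ.image_pairMins,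
    pairMins, prod_filter_mul_prod_filter_not]

lemma two_mul_card_pairMins : 2 * #(pairMins π) = Fintype.card α := by
  have h := card_filter_add_card_filter_not (s := (univ : Finset α)) (fun x => x < π x)
  rw [← hπ.image_pairMins, card_image_of_injective _ π.injective] at h
  rw [two_mul, ← card_univ]
  exact h

lemma apply_mem_pairMins_iff {x : α} : π x ∈ pairMins π ↔ x ∉ pairMins π := by
  rw [mem_pairMins, mem_pairMins, hπ.1 x, not_lt]
  exact ⟨le_of_lt, fun h => lt_of_le_of_ne h (hπ.2 x)⟩

lemma prod_pairMins_mul_mul {M : Type*} [CommMonoid M] (a b : α → M) :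
    ∏ ρ ∈ pairMins π, (b (π ρ) * a ρ * b ρ) = (∏ x, b x) * ∏ ρ ∈ pairMins π, a ρ := by
  rw [hπ.prod_eq_prod_pairMins b, ← prod_mul_distrib]
  exact prod_congr rfl fun ρ _ => by rw [mul_comm (b ρ), mul_right_comm]

/-- For `π`-invariant `f`, the product over `pairMins` does not depend on which point of each
2-cycle is chosen. -/
lemma prod_pairMins_conj {M : Type*} [CommMonoid M] (σ : Perm α) {f : α → M}
    (hf : ∀ x, f (π x) = f x) :
    ∏ ρ ∈ pairMins (σ * π * σ⁻¹), f (σ⁻¹ ρ) = ∏ ρ ∈ pairMins π, f ρ := by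
  have hπ' := hπ.conj σ
  refine prod_nbij' (fun ρ => min (σ⁻¹ ρ) (π (σ⁻¹ ρ))) (fun ρ => min (σ ρ) (σ (π ρ)))
    (fun ρ _ => hπ.min_mem_pairMins _) (fun ρ _ => by simpa using hπ'.min_mem_pairMins (σ ρ))
    (fun ρ hρ => ?_) (fun ρ hρ => ?_) (fun ρ _ => ?_)
  · have hlt : ρ < σ (π (σ⁻¹ ρ)) := mem_pairMins.1 hρ
    rcases min_choice (σ⁻¹ ρ) (π (σ⁻¹ ρ)) with h | h <;> rw [h]
    · simpa using hlt.le
    · simpa [hπ.1 _, min_comm] using hlt.le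
  · have hlt : ρ < π ρ := mem_pairMins.1 hρ
    rcases min_choice (σ ρ) (σ (π ρ)) with h | h <;> rw [h]
    · simpa using hlt.le
    · simpa [hπ.1 _, min_comm] using hlt.le
  · rcases min_choice (σ⁻¹ ρ) (π (σ⁻¹ ρ)) with h | h <;> rw [h]
    exact (hf _).symm

end IsFixedPointFreeInvolution

end Involution

section SignedPairing

variable {α : Type*}

/-- The data `(π, a)` of the monomial matrices `monoMat π a` conjugate to `c₁` or `c₂`. -/
structure IsSignedPairing (π : Perm α) (a : α → ℂ) : Prop where
  isFixedPointFreeInvolution : IsFixedPointFreeInvolution π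
  sq_eq_one : ∀ x, a x ^ 2 = 1
  apply_perm : ∀ x, a (π x) = a x

namespace IsSignedPairing

variable {π : Perm α} {a : α → ℂ} (h : IsSignedPairing π a)
include h

lemma diag {b : α → ℂ} (hb : ∀ x, b x ^ 2 = 1) :
    IsSignedPairing π (fun x => b (π x) * a x * b x) :=
  ⟨h.1, fun x => by simp only [mul_pow, hb, h.2, one_mul],
    fun x => by simp only [h.1.1 x, h.3 x]; ring⟩

lemma conj (σ : Perm α) : IsSignedPairing (σ * π * σ⁻¹) (fun x => a (σ⁻¹ x)) :=
  ⟨h.1.conj σ, fun x => h.2 _, fun x => by simpa using h.3 (σ⁻¹ x)⟩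

variable [Fintype α] [LinearOrder α]

lemma prod_eq_one : ∏ x, a x = 1 := by
  rw [h.1.prod_eq_prod_pairMins]
  exact Finset.prod_eq_one fun ρ _ => by rw [h.3, ← sq, h.2]

lemma exists_diag_conj {a' : α → ℂ} (h' : IsSignedPairing π a')
    (hs : ∏ ρ ∈ pairMins π, a ρ = ∏ ρ ∈ pairMins π, a' ρ) :
    ∃ b : α → ℂ, (∀ x, b x ^ 2 = 1) ∧ ∏ x, b x = 1 ∧ ∀ x, b (π x) * a x * b x = a' x := by
  have hπ := h.1
  refine ⟨fun x => if x ∈ pairMins π then 1 else a x * a' x, fun x => ?_, ?_, fun x => ?_⟩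
  · dsimp only
    split_ifs <;> simp only [one_pow, mul_pow, h.2, h'.2, one_mul]
  · calc ∏ x, (if x ∈ pairMins π then 1 else a x * a' x)
        = ∏ ρ ∈ pairMins π, (a ρ * a' ρ) := by
          rw [hπ.prod_eq_prod_pairMins]
          refine prod_congr rfl fun ρ hρ => ?_
          rw [if_pos hρ, if_neg fun hmem => hπ.apply_mem_pairMins_iff.1 hmem hρ, h.3, h'.3,
            one_mul]
      _ = ∏ ρ ∈ pairMins π, a' ρ ^ 2 := by rw [prod_mul_distrib, hs, prod_pow, sq]
      _ = 1 := Finset.prod_eq_one fun ρ _ => h'.2 ρ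
  · dsimp only
    by_cases hx : x ∈ pairMins π
    · rw [if_pos hx, if_neg fun hmem => hπ.apply_mem_pairMins_iff.1 hmem hx, h.3, h'.3]
      linear_combination a' x * h.2 x
    · rw [if_neg hx, if_pos (hπ.apply_mem_pairMins_iff.2 hx)]
      linear_combination a' x * h.2 x

end IsSignedPairing

end SignedPairing

section MonomialConj

variable {m : ℕ}

lemma monoMat_apply (π : Perm (Fin m)) (a : Fin m → ℂ) (i j : Fin m) :
    monoMat m π a i j = if i = π j then a j else 0 := rfl

lemma monoMat_mul_eq_mul_monoMat (σ π : Perm (Fin m)) (a b : Fin m → ℂ)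
    (hb : ∀ x, b x ^ 2 = 1) :
    monoMat m σ b * monoMat m π a =
      monoMat m (σ * π * σ⁻¹) (fun x => b (π (σ⁻¹ x)) * a (σ⁻¹ x) * b (σ⁻¹ x)) *
        monoMat m σ b := by
  rw [monoMat_mul, monoMat_mul, inv_mul_cancel_right]
  congr 1
  funext x
  simp only [Perm.inv_def, symm_apply_apply]
  linear_combination -(a x * b (π x)) * hb x

lemma IsSignedPairing.monoMat_mem_GSet {π : Perm (Fin m)} {a : Fin m → ℂ}
    (h : IsSignedPairing π a) : monoMat m π a ∈ GSet 2 2 m :=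
  ⟨π, a, h.sq_eq_one, by rw [h.prod_eq_one, one_pow], rfl⟩

def signedPairingMats (m : ℕ) (s : ℂ) : Set (Matrix (Fin m) (Fin m) ℂ) :=
  {g | ∃ π a, IsSignedPairing π a ∧ ∏ ρ ∈ pairMins π, a ρ = s ∧ g = monoMat m π a}

namespace IsSignedPairing

variable {π : Perm (Fin m)} {a : Fin m → ℂ} (h : IsSignedPairing π a)
include h

lemma conjClass_subset :
    conjClass 2 2 m (monoMat m π a) ⊆ signedPairingMats m (∏ ρ ∈ pairMins π, a ρ) := by
  rintro g ⟨-, _, ⟨σ, b, hb, hpow, rfl⟩, hconj⟩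
  have hb₀ : ∀ x, b x ≠ 0 := fun x => a_ne_zero two_pos (hb x)
  have hdet : ∏ x, b x = 1 := by simpa using hpow
  rw [monoMat_mul_eq_mul_monoMat σ π a b hb] at hconj
  refine ⟨_, _, (h.diag hb).conj σ, ?_, ?_⟩
  · refine (h.1.prod_pairMins_conj σ (f := fun x => b (π x) * a x * b x)
      (h.diag hb).apply_perm).trans ?_
    rw [h.1.prod_pairMins_mul_mul, hdet, one_mul]
  · calc g = g * monoMat m σ b * monoMat m σ⁻¹ (fun x => (b (σ⁻¹ x))⁻¹) := by
          rw [mul_assoc, monoMat_mul_inv _ _ _ hb₀, mul_one]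
      _ = _ := by rw [← hconj, mul_assoc, monoMat_mul_inv _ _ _ hb₀, mul_one]

lemma subset_conjClass :
    signedPairingMats m (∏ ρ ∈ pairMins π, a ρ) ⊆ conjClass 2 2 m (monoMat m π a) := by
  rintro _ ⟨π', a', h', hs, rfl⟩
  refine ⟨h'.monoMat_mem_GSet, ?_⟩
  obtain ⟨σ, rfl⟩ := h.1.exists_conj_eq h'.1
  have h₁ : IsSignedPairing π (fun x => a' (σ x)) := by
    simpa [mul_assoc] using h'.conj σ⁻¹
  have hs₁ : ∏ ρ ∈ pairMins π, a' (σ ρ) = ∏ ρ ∈ pairMins π, a ρ := by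
    rw [← hs]
    simpa [mul_assoc] using h'.1.prod_pairMins_conj σ⁻¹ h'.apply_perm
  obtain ⟨b, hb, hdet, hba⟩ := h.exists_diag_conj h₁ hs₁.symm
  refine ⟨monoMat m σ b, ⟨σ, b, hb, by simp [hdet], rfl⟩, ?_⟩
  rw [monoMat_mul_eq_mul_monoMat σ π a b hb]
  simp [hba]

lemma conjClass_eq :
    conjClass 2 2 m (monoMat m π a) = signedPairingMats m (∏ ρ ∈ pairMins π, a ρ) :=
  h.conjClass_subset.antisymm h.subset_conjClass

end IsSignedPairing

end MonomialConj

section PairPerm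

variable {k : ℕ}

lemma pairPerm_val (x : Fin (2 * k)) :
    (pairPerm k x : ℕ) = if (x : ℕ) % 2 = 0 then (x : ℕ) + 1 else (x : ℕ) - 1 := by
  simp only [pairPerm, Function.Involutive.coe_toPerm, pairFn]
  split_ifs <;> rfl

lemma isFixedPointFreeInvolution_pairPerm : IsFixedPointFreeInvolution (pairPerm k) := by
  refine ⟨pairFn_invol k, fun x hx => ?_⟩
  have := congrArg Fin.val hx
  rw [pairPerm_val] at this
  split_ifs at this <;> omega

lemma mem_pairMins_pairPerm {x : Fin (2 * k)} : x ∈ pairMins (pairPerm k) ↔ (x : ℕ) % 2 = 0 := by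
  rw [mem_pairMins, Fin.lt_def, pairPerm_val]
  split_ifs <;> omega

lemma pairPerm_val_lt_two_iff {x : Fin (2 * k)} : (pairPerm k x : ℕ) < 2 ↔ (x : ℕ) < 2 := by
  rw [pairPerm_val]
  split_ifs <;> omega

lemma isSignedPairing_c2 : IsSignedPairing (pairPerm k) (fun _ => 1) :=
  ⟨isFixedPointFreeInvolution_pairPerm, fun _ => one_pow 2, fun _ => rfl⟩

lemma conjClass_c2Mat : conjClass 2 2 (2 * k) (c2Mat k) = signedPairingMats (2 * k) 1 := by
  simpa [c2Mat] using isSignedPairing_c2.conjClass_eq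

def c1Weight (x : Fin (2 * k)) : ℂ := if (x : ℕ) < 2 then -1 else 1

lemma c1Mat_eq : c1Mat k = monoMat (2 * k) (pairPerm k) c1Weight := by
  ext i j
  rw [c1Mat, dMat, c2Mat, diagonal_mul, monoMat_apply, monoMat_apply]
  by_cases h : i = pairPerm k j
  · simp only [h, if_true, mul_one, c1Weight, pairPerm_val_lt_two_iff]
  · simp only [h, if_false, mul_zero]

lemma isSignedPairing_c1 : IsSignedPairing (pairPerm k) c1Weight := by
  refine ⟨isFixedPointFreeInvolution_pairPerm, fun x => ?_, fun x => ?_⟩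
  · unfold c1Weight
    split_ifs <;> norm_num
  · simp only [c1Weight, pairPerm_val_lt_two_iff]

lemma prod_pairMins_c1Weight (hk : 0 < k) : ∏ ρ ∈ pairMins (pairPerm k), c1Weight ρ = -1 := by
  have h₀ : (⟨0, by omega⟩ : Fin (2 * k)) ∈ pairMins (pairPerm k) := mem_pairMins_pairPerm.2 rfl
  rw [← mul_prod_erase _ _ h₀, prod_eq_one fun ρ hρ => ?_]
  · simp [c1Weight]
  · obtain ⟨hne, hρ⟩ := mem_erase.1 hρ
    have : (ρ : ℕ) ≠ 0 := fun h => hne (Fin.ext h)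
    have := mem_pairMins_pairPerm.1 hρ
    rw [c1Weight, if_neg (by omega)]

lemma conjClass_c1Mat (hk : 0 < k) :
    conjClass 2 2 (2 * k) (c1Mat k) = signedPairingMats (2 * k) (-1) := by
  rw [c1Mat_eq, isSignedPairing_c1.conjClass_eq, prod_pairMins_c1Weight hk]

end PairPerm

section PairingWeight

variable {α : Type*} [LinearOrder α] {π : Perm α}

def pairingWeight (π : Perm α) (S : Finset α) (x : α) : ℂ :=
  if min x (π x) ∈ S then -1 else 1

lemma IsFixedPointFreeInvolution.isSignedPairing_pairingWeight
    (hπ : IsFixedPointFreeInvolution π) (S : Finset α) :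
    IsSignedPairing π (pairingWeight π S) := by
  refine ⟨hπ, fun x => ?_, fun x => ?_⟩
  · unfold pairingWeight
    split_ifs <;> norm_num
  · rw [pairingWeight, pairingWeight, hπ.min_apply_eq]

variable [Fintype α]

lemma pairingWeight_of_mem_pairMins {S : Finset α} {ρ : α} (hρ : ρ ∈ pairMins π) :
    pairingWeight π S ρ = if ρ ∈ S then -1 else 1 := by
  rw [pairingWeight, min_eq_left (mem_pairMins.1 hρ).le]

lemma prod_pairMins_pairingWeight {S : Finset α} (hS : S ⊆ pairMins π) :
    ∏ ρ ∈ pairMins π, pairingWeight π S ρ = (-1) ^ #S := by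
  rw [prod_congr rfl fun ρ hρ => pairingWeight_of_mem_pairMins hρ, prod_ite_mem,
    inter_eq_right.2 hS, prod_const]

lemma pairingWeight_injOn {S S' : Finset α} (hS : S ⊆ pairMins π) (hS' : S' ⊆ pairMins π)
    (h : pairingWeight π S = pairingWeight π S') : S = S' := by
  have key : ∀ {T : Finset α}, T ⊆ pairMins π → ∀ ρ ∈ pairMins π,
      (ρ ∈ T ↔ pairingWeight π T ρ = -1) := fun _ ρ hρ => by
    rw [pairingWeight_of_mem_pairMins hρ]
    split_ifs <;> norm_num [*]
  ext ρ
  by_cases hρ : ρ ∈ pairMins π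
  · rw [key hS ρ hρ, key hS' ρ hρ, h]
  · exact iff_of_false (fun hmem => hρ (hS hmem)) (fun hmem => hρ (hS' hmem))

lemma IsSignedPairing.pairingWeight_filter {a : α → ℂ} (h : IsSignedPairing π a) :
    pairingWeight π ((pairMins π).filter (a · = -1)) = a := by
  funext x
  have hmin : a (min x (π x)) = a x := by
    rcases min_choice x (π x) with hm | hm <;> rw [hm]
    exact h.apply_perm x
  simp only [pairingWeight, mem_filter, h.1.min_mem_pairMins, true_and, hmin]
  rcases sq_eq_one_iff.1 (h.sq_eq_one x) with hx | hx <;> norm_num [hx]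

lemma IsSignedPairing.prod_pairMins_eq {a : α → ℂ} (h : IsSignedPairing π a) :
    ∏ ρ ∈ pairMins π, a ρ = (-1) ^ #((pairMins π).filter (a · = -1)) := by
  conv_lhs => rw [← h.pairingWeight_filter]
  exact prod_pairMins_pairingWeight (filter_subset _ _)

end PairingWeight

section Parametrization

variable {m : ℕ}

lemma monoMat_inj {π π' : Perm (Fin m)} {a a' : Fin m → ℂ} (ha : ∀ x, a x ≠ 0)
    (h : monoMat m π a = monoMat m π' a') : π = π' ∧ a = a' := by
  have key : ∀ j, π j = π' j ∧ a j = a' j := fun j => by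
    have hj := congrFun (congrFun h (π j)) j
    simp only [monoMat_apply, if_true] at hj
    split_ifs at hj with hπ
    · exact ⟨hπ, hj⟩
    · exact absurd hj (ha j)
  exact ⟨Equiv.ext fun j => (key j).1, funext fun j => (key j).2⟩

def pairingData (m : ℕ) : Finset (Σ _ : Perm (Fin m), Finset (Fin m)) :=
  (univ.filter IsFixedPointFreeInvolution).sigma fun π => (pairMins π).powerset

def pairingMat (p : Σ _ : Perm (Fin m), Finset (Fin m)) : Matrix (Fin m) (Fin m) ℂ :=
  monoMat m p.1 (pairingWeight p.1 p.2)

lemma mem_pairingData {p : Σ _ : Perm (Fin m), Finset (Fin m)} :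
    p ∈ pairingData m ↔ IsFixedPointFreeInvolution p.1 ∧ p.2 ⊆ pairMins p.1 := by
  simp [pairingData]

lemma injOn_pairingMat :
    Set.InjOn pairingMat (↑(pairingData m) : Set (Σ _ : Perm (Fin m), Finset (Fin m))) := by
  rintro ⟨π, S⟩ hp ⟨π', S'⟩ hp' h
  obtain ⟨rfl, hw⟩ := monoMat_inj (fun x => by unfold pairingWeight; split_ifs <;> norm_num) h
  exact congrArg _ (pairingWeight_injOn (mem_pairingData.1 hp).2 (mem_pairingData.1 hp').2 hw)

lemma signedPairingMats_eq_image (s : ℂ) :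
    signedPairingMats m s =
      ↑(((pairingData m).filter fun p => (-1) ^ #p.2 = s).image pairingMat) := by
  ext g
  simp only [coe_image, coe_filter, Set.mem_image, Set.mem_ofPred_eq, mem_pairingData]
  constructor
  · rintro ⟨π, a, h, rfl, rfl⟩
    exact ⟨⟨π, (pairMins π).filter (a · = -1)⟩, ⟨⟨h.1, filter_subset _ _⟩,
      h.prod_pairMins_eq.symm⟩, by rw [pairingMat, h.pairingWeight_filter]⟩
  · rintro ⟨⟨π, S⟩, ⟨⟨hπ, hS⟩, rfl⟩, rfl⟩
    exact ⟨π, _, hπ.isSignedPairing_pairingWeight S, prod_pairMins_pairingWeight hS, rfl⟩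

end Parametrization

section Counting

variable {ι β R : Type*} [Fintype ι] [DecidableEq β] [CommRing R]

lemma sum_powerset_neg_one_pow_mul_prod (q : ι → β) (B : Finset β) :
    ∑ S ∈ B.powerset, (-1 : R) ^ #S * ∏ t, (if q t ∈ S then -1 else 1) =
      ∏ ρ ∈ B, (1 - (-1) ^ #{t | q t = ρ}) := by
  simp_rw [sub_eq_add_neg, prod_one_add]
  refine sum_congr rfl fun S _ => ?_
  have hfib : ∏ t, (if q t ∈ S then (-1 : R) else 1) = ∏ ρ ∈ S, (-1) ^ #{t | q t = ρ} := by
    simp_rw [← prod_ite_eq S (q _) fun _ => (-1 : R)]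
    rw [prod_comm]
    refine prod_congr rfl fun ρ _ => ?_
    rw [prod_ite, prod_const, prod_const_one, mul_one]
  rw [hfib, ← prod_const, ← prod_mul_distrib]
  simp_rw [neg_one_mul]

/-- All fibres of `q` have odd size exactly when `q` is a bijection onto `B`. -/
lemma prod_one_sub_neg_one_pow_card_fiber (q : ι → β) (B : Finset β) (hq : ∀ t, q t ∈ B)
    (hcard : #B = Fintype.card ι) :
    ∏ ρ ∈ B, (1 - (-1 : R) ^ #{t | q t = ρ}) = if Function.Injective q then 2 ^ #B else 0 := by
  have himage : univ.image q ⊆ B := fun ρ hρ => by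
    obtain ⟨t, -, rfl⟩ := mem_image.1 hρ
    exact hq t
  split_ifs with hinj
  · have heq : univ.image q = B := eq_of_subset_of_card_le himage
      (by rw [card_image_of_injective _ hinj, card_univ, hcard])
    rw [← prod_const]
    refine prod_congr rfl fun ρ hρ => ?_
    obtain ⟨t, -, rfl⟩ := mem_image.1 (heq ▸ hρ)
    have hfib : #{t' | q t' = q t} = 1 := card_eq_one.2 ⟨t, by ext; simp [hinj.eq_iff]⟩
    rw [hfib]
    norm_num
  · have hlt : #(univ.image q) < #B := by
      rw [hcard, ← card_univ]
      exact lt_of_le_of_ne card_image_le fun h => hinj fun x y hxy =>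
        card_image_iff.1 h (mem_coe.2 (mem_univ x)) (mem_coe.2 (mem_univ y)) hxy
    obtain ⟨ρ, hρB, hρ⟩ := exists_mem_notMem_of_card_lt_card hlt
    refine prod_eq_zero hρB ?_
    rw [card_eq_zero.2 (filter_eq_empty_iff.2 fun t _ h => hρ (mem_image.2 ⟨t, mem_univ t, h⟩)),
      pow_zero, sub_self]

end Counting

section Matching

variable {α ι : Type*} {π : Perm α}

lemma IsFixedPointFreeInvolution.eq_of_surjective {i : ι → α} {π' : Perm α}
    (hπ : IsFixedPointFreeInvolution π) (hπ' : IsFixedPointFreeInvolution π')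
    (h : Function.Surjective (Sum.elim i (π ∘ i))) (hi : π ∘ i = π' ∘ i) : π = π' := by
  refine Equiv.ext fun x => ?_
  obtain ⟨t | t, rfl⟩ := h x
  · exact congrFun hi t
  · have hit : π (i t) = π' (i t) := congrFun hi t
    simp only [Sum.elim_inr, Function.comp_apply, hπ.1 _]
    rw [hit, hπ'.1]

lemma IsFixedPointFreeInvolution.injective_sumElim_iff [LinearOrder α]
    (hπ : IsFixedPointFreeInvolution π) (i : ι → α) :
    Function.Injective (Sum.elim i (π ∘ i)) ↔
      Function.Injective fun t => min (i t) (π (i t)) := by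
  rw [Sum.elim_injective]
  constructor
  · rintro ⟨hi, hπi, hne⟩ t t' h
    rcases min_choice (i t) (π (i t)) with h₁ | h₁ <;>
      rcases min_choice (i t') (π (i t')) with h₂ | h₂ <;> simp only [h₁, h₂] at h
    · exact hi h
    · exact absurd h (hne t t')
    · exact absurd h.symm (hne t' t)
    · exact hπi h
  · intro h
    have hne : ∀ t t', i t ≠ π (i t') := fun t t' heq => by
      have := h (show min (i t) (π (i t)) = min (i t') (π (i t')) by rw [heq, hπ.min_apply_eq])
      subst this
      exact hπ.2 _ heq.symm
    exact ⟨fun t t' heq => h (by simp only [heq]),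
      fun t t' heq => h (by simp only [π.injective heq]), hne⟩

/-- Pair each `i t` with `o t`: by counting, `Sum.elim i o` is a bijection. -/
lemma exists_isFixedPointFreeInvolution_of_injective [Fintype α] [Fintype ι] {i o : ι → α}
    (hcard : Fintype.card α = 2 * Fintype.card ι) (h : Function.Injective (Sum.elim i o)) :
    ∃ π : Perm α, IsFixedPointFreeInvolution π ∧ o = π ∘ i := by
  have hbij : Function.Bijective (Sum.elim i o) :=
    (Fintype.bijective_iff_injective_and_card _).2 ⟨h, by simp [hcard, two_mul]⟩
  set e := Equiv.ofBijective _ hbij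
  refine ⟨(e.symm.trans (Equiv.sumComm ι ι)).trans e, ⟨fun x => by simp, fun x hx => ?_⟩,
    funext fun t => ?_⟩
  · have := congrArg e.symm hx
    simp only [trans_apply, symm_apply_apply, sumComm_apply] at this
    revert this
    generalize e.symm x = y
    rcases y with t | t <;> simp
  · have : e.symm (i t) = Sum.inl t := e.symm_apply_eq.2 rfl
    simp [this, e]

end Matching

section KernelMap

variable {n t : ℕ}

lemma kernelMap_sum {γ : Type*} (s : Finset γ)
    (K : γ → (Fin t → Fin n) → (Fin t → Fin n) → ℂ) :
    ∑ x ∈ s, kernelMap n t (K x) = kernelMap n t fun o i => ∑ x ∈ s, K x o i := by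
  refine LinearMap.ext fun f => funext fun o => ?_
  rw [LinearMap.sum_apply, Finset.sum_apply]
  simp only [kernelMap, LinearMap.coe_mk, AddHom.coe_mk, sum_mul]
  exact sum_comm

lemma kernelMap_sub (K K' : (Fin t → Fin n) → (Fin t → Fin n) → ℂ) :
    kernelMap n t K - kernelMap n t K' = kernelMap n t fun o i => K o i - K' o i := by
  refine LinearMap.ext fun f => funext fun o => ?_
  simp only [LinearMap.sub_apply, Pi.sub_apply, kernelMap, LinearMap.coe_mk, AddHom.coe_mk,
    sub_mul, sum_sub_distrib]

lemma kernelMap_smul (c : ℂ) (K : (Fin t → Fin n) → (Fin t → Fin n) → ℂ) :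
    c • kernelMap n t K = kernelMap n t fun o i => c * K o i := by
  refine LinearMap.ext fun f => funext fun o => ?_
  simp only [LinearMap.smul_apply, Pi.smul_apply, smul_eq_mul, kernelMap, LinearMap.coe_mk,
    AddHom.coe_mk, mul_sum, mul_assoc]

lemma coeX_singletonSP (c : Fin t ⊕ Fin t → Fin n) :
    coeX n t (singletonSP t) c = if Function.Injective c then 1 else 0 :=
  if_congr ⟨fun h _ _ hab => (h _ _).2 hab, fun h _ _ => ⟨congrArg c, @h _ _⟩⟩ rfl rfl

end KernelMap

lemma prod_monoMat_apply {m : ℕ} {ι : Type*} [Fintype ι] (π : Perm (Fin m)) (a : Fin m → ℂ)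
    (o i : ι → Fin m) :
    ∏ t, monoMat m π a (o t) (i t) = if ∀ t, o t = π (i t) then ∏ t, a (i t) else 0 := by
  simp only [monoMat_apply, prod_ite_zero, mem_univ, true_implies]

lemma sum_filter_neg_one_pow_sub_sum_filter {γ : Type*} (s : Finset γ) (e : γ → ℕ)
    (F : γ → ℂ) :
    ∑ p ∈ s.filter (fun p => (-1 : ℂ) ^ e p = 1), F p
      - ∑ p ∈ s.filter (fun p => (-1 : ℂ) ^ e p = -1), F p = ∑ p ∈ s, (-1) ^ e p * F p := by
  rw [sum_filter, sum_filter, ← sum_sub_distrib]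
  refine sum_congr rfl fun p _ => ?_
  rcases neg_one_pow_eq_or ℂ (e p) with h | h <;> norm_num [h]

section KernelIdentity

variable {k : ℕ}

lemma sum_powerset_pairingMat {π : Perm (Fin (2 * k))} (hπ : IsFixedPointFreeInvolution π)
    (o i : Fin k → Fin (2 * k)) :
    ∑ S ∈ (pairMins π).powerset, (-1 : ℂ) ^ #S * ∏ t, pairingMat ⟨π, S⟩ (o t) (i t) =
      if o = π ∘ i ∧ Function.Injective (Sum.elim i o) then 2 ^ k else 0 := by
  by_cases ho : o = π ∘ i
  · subst ho
    have hcard : #(pairMins π) = k := by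
      have := hπ.two_mul_card_pairMins
      simp only [Fintype.card_fin] at this
      omega
    simp only [pairingMat, prod_monoMat_apply, Function.comp_apply, implies_true, if_true,
      pairingWeight, true_and]
    rw [sum_powerset_neg_one_pow_mul_prod, prod_one_sub_neg_one_pow_card_fiber _ _
      (fun t => hπ.min_mem_pairMins _) (by simp [hcard]), hcard]
    exact if_congr (hπ.injective_sumElim_iff i).symm rfl rfl
  · rw [if_neg fun h => ho h.1]
    refine sum_eq_zero fun S _ => ?_
    dsimp only [pairingMat]
    rw [prod_monoMat_apply, if_neg, mul_zero]
    exact fun h => ho (funext h)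

lemma sum_pairingData_neg_one_pow_mul (o i : Fin k → Fin (2 * k)) :
    ∑ p ∈ pairingData (2 * k), (-1 : ℂ) ^ #p.2 * ∏ t, pairingMat p (o t) (i t) =
      if Function.Injective (Sum.elim i o) then 2 ^ k else 0 := by
  rw [pairingData, sum_sigma, sum_congr rfl fun π hπ =>
    sum_powerset_pairingMat (mem_filter.1 hπ).2 o i]
  split_ifs with hinj
  · have hcard : Fintype.card (Fin (2 * k)) = 2 * Fintype.card (Fin k) := by simp
    have hsurj : Function.Surjective (Sum.elim i o) :=
      ((Fintype.bijective_iff_injective_and_card _).2 ⟨hinj, by simp [two_mul]⟩).2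
    obtain ⟨π₀, hπ₀, rfl⟩ := exists_isFixedPointFreeInvolution_of_injective hcard hinj
    rw [sum_eq_single π₀ (fun π hπ hne => if_neg fun h =>
        hne (hπ₀.eq_of_surjective (mem_filter.1 hπ).2 hsurj h.1).symm)
      (fun h => absurd (mem_filter.2 ⟨mem_univ _, hπ₀⟩) h)]
    simp [hinj]
  · exact sum_eq_zero fun π _ => if_neg fun h => hinj h.2

end KernelIdentity

/-- Let `C₁, C₂` be the conjugacy classes of `c₁, c₂` in
`G(2,2,2k)`.  Then, as endomorphisms of `(ℂ^{2k})^{⊗k}`,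
`Σ_{g ∈ C₂} g^{⊗k} − Σ_{g ∈ C₁} g^{⊗k} = 2^k • M_{k,2,2}`. -/
theorem statement17 (k : ℕ) (hk : 0 < k) :
    (∑ᶠ g ∈ conjClass 2 2 (2 * k) (c2Mat k), tensorPow (2 * k) k g)
      - (∑ᶠ g ∈ conjClass 2 2 (2 * k) (c1Mat k), tensorPow (2 * k) k g)
      = (2 ^ k : ℂ) • Mop k := by
  have hinj : ∀ s : ℂ, Set.InjOn pairingMat
      ↑((pairingData (2 * k)).filter fun p => (-1) ^ #p.2 = s) :=
    fun _ => (injOn_pairingMat (m := 2 * k)).mono (coe_subset.2 (filter_subset _ _))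
  rw [conjClass_c2Mat, conjClass_c1Mat hk, signedPairingMats_eq_image,
    signedPairingMats_eq_image, finsum_mem_coe_finset, finsum_mem_coe_finset,
    sum_image (hinj 1), sum_image (hinj (-1))]
  simp only [tensorPow, kernelMap_sum, kernelMap_sub, Mop, phiX, kernelMap_smul]
  congr 1
  funext o i
  rw [sum_filter_neg_one_pow_sub_sum_filter, sum_pairingData_neg_one_pow_mul, coeX_singletonSP]
  split_ifs <;> simp

end Tanabe
end
end
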